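/- arXiv:1906.04768 — 6 statements merged into one kernel-verified Lean document; each statement's English description precedes it below -/
import Mathlib

section
/- For the complete graph K_n, the generating function Σ_{k≥0} #|kq| z^k equals (Σ_{k=0}^{n−1} z^{k(n−1)}) / ((1−z^n)^{n−1}(1−z)), where |kq| is the complete linear system of the divisor kq. -/
open SimpleGraph PowerSeries

namespace Stmt8Aux

open Finset



lemma geom_inv (d : ℕ) (hd : 1 ≤ d) :
    (PowerSeries.mk fun k => if d ∣ k then (1:ℤ) else 0) * (1 - X ^ d) = 1 := by
  ext k
  rw [mul_sub, mul_one, map_sub, coeff_mul_X_pow']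
  rcases Nat.eq_zero_or_pos k with rfl | hk
  · simp [show ¬ d ≤ 0 by omega]
  · rw [coeff_mk]
    by_cases h : d ≤ k
    · have hiff : d ∣ k ↔ d ∣ k - d := by
        constructor
        · intro hdk; exact Nat.dvd_sub hdk dvd_rfl
        · intro hdk; have := Nat.dvd_add hdk (dvd_refl d); rwa [Nat.sub_add_cancel h] at this
      rw [if_pos h, coeff_mk, coeff_one]
      by_cases h2 : d ∣ k
      · rw [if_pos h2, if_pos (hiff.mp h2), if_neg (show ¬ k = 0 by omega)]; ring
      · rw [if_neg h2, if_neg (fun hh => h2 (hiff.mpr hh)), if_neg (show ¬ k = 0 by omega)]; ring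
    · rw [if_neg h, if_neg (fun hdk => h (Nat.le_of_dvd hk hdk)), coeff_one,
        if_neg (show ¬ k = 0 by omega)]
      ring




lemma finite_S (d m k : ℕ) (hd : 1 ≤ d) : Finite {a : Fin m → ℕ // d * ∑ i, a i ≤ k} := by
  apply Finite.of_injective (β := Fin m → Fin (k+1)) (fun a => fun i => ⟨a.1 i, by
    have h1 : a.1 i ≤ ∑ j, a.1 j :=
      Finset.single_le_sum (fun j _ => Nat.zero_le _) (Finset.mem_univ i)
    have h2 : ∑ j, a.1 j ≤ d * ∑ j, a.1 j := Nat.le_mul_of_pos_left _ hd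
    have h3 := a.2
    omega⟩)
  intro a b hab
  apply Subtype.ext; funext i
  exact congrArg Fin.val (congrFun hab i)

lemma card_S_last_zero (d m k : ℕ) :
    Nat.card {x : {a : Fin (m+1) → ℕ // d * ∑ i, a i ≤ k} // x.1 (Fin.last m) = 0}
      = Nat.card {a : Fin m → ℕ // d * ∑ i, a i ≤ k} := by
  apply Nat.card_congr
  refine ⟨fun x => ⟨Fin.init x.1.1, ?_⟩, fun y => ⟨⟨Fin.snoc y.1 0, ?_⟩, by simp⟩, ?_, ?_⟩
  · have h := x.1.2
    rw [Fin.sum_univ_castSucc, x.2, add_zero] at h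
    simpa [Fin.init] using h
  · rw [Fin.sum_univ_castSucc]
    simpa using y.2
  · rintro ⟨⟨a, ha⟩, hL⟩
    apply Subtype.ext; apply Subtype.ext
    simp only
    rw [← hL, Fin.snoc_init_self]
  · rintro ⟨y, hy⟩
    apply Subtype.ext
    simp [Fin.init_snoc]

lemma card_S_last_pos (d m k : ℕ) (hd : 1 ≤ d) (hdk : d ≤ k) :
    Nat.card {x : {a : Fin (m+1) → ℕ // d * ∑ i, a i ≤ k} // x.1 (Fin.last m) ≠ 0}
      = Nat.card {a : Fin (m+1) → ℕ // d * ∑ i, a i ≤ k - d} := by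
  apply Nat.card_congr
  refine ⟨fun x => ⟨Function.update x.1.1 (Fin.last m) (x.1.1 (Fin.last m) - 1), ?_⟩,
    fun y => ⟨⟨Function.update y.1 (Fin.last m) (y.1 (Fin.last m) + 1), ?_⟩, by simp⟩, ?_, ?_⟩
  · have hs := x.1.2
    rw [← Finset.add_sum_erase _ _ (Finset.mem_univ (Fin.last m))] at hs
    rw [Finset.sum_update_of_mem (Finset.mem_univ _), Finset.sdiff_singleton_eq_erase]
    have hL : x.1.1 (Fin.last m) ≠ 0 := x.2
    set A := x.1.1 (Fin.last m) with hA
    set B := ∑ x_1 ∈ Finset.univ.erase (Fin.last m), x.1.1 x_1 with hB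
    have e1 : d * (A - 1 + B) + d = d * (A + B) := by
      have : A - 1 + B + 1 = A + B := by omega
      rw [← this]; ring
    omega
  · have hs := y.2
    rw [← Finset.add_sum_erase _ _ (Finset.mem_univ (Fin.last m))] at hs
    rw [Finset.sum_update_of_mem (Finset.mem_univ _), Finset.sdiff_singleton_eq_erase]
    set A := y.1 (Fin.last m) with hA
    set B := ∑ x_1 ∈ Finset.univ.erase (Fin.last m), y.1 x_1 with hB
    have e1 : d * (A + 1 + B) = d * (A + B) + d := by ring
    omega
  · rintro ⟨⟨a, ha⟩, hL⟩
    apply Subtype.ext; apply Subtype.ext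
    simp only [Function.update_idem, Function.update_self]
    rw [Nat.sub_add_cancel (Nat.one_le_iff_ne_zero.mpr hL)]
    exact Function.update_eq_self _ _
  · rintro ⟨y, hy⟩
    apply Subtype.ext
    simp only [Function.update_idem, Function.update_self, Nat.add_sub_cancel]
    exact Function.update_eq_self _ _

lemma card_S_last_pos_empty (d m k : ℕ) (hd : 1 ≤ d) (hdk : k < d) :
    Nat.card {x : {a : Fin (m+1) → ℕ // d * ∑ i, a i ≤ k} // x.1 (Fin.last m) ≠ 0} = 0 := by
  rw [Nat.card_eq_zero]
  refine Or.inl ⟨?_⟩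
  rintro ⟨⟨a, ha⟩, hL⟩
  have h1 : a (Fin.last m) ≤ ∑ i, a i :=
    Finset.single_le_sum (fun j _ => Nat.zero_le _) (Finset.mem_univ _)
  have h2 : d * a (Fin.last m) ≤ d * ∑ i, a i := Nat.mul_le_mul_left _ h1
  have h3 : d ≤ d * a (Fin.last m) := Nat.le_mul_of_pos_right _ (Nat.pos_of_ne_zero hL)
  omega

lemma card_S_succ (d m k : ℕ) (hd : 1 ≤ d) :
    Nat.card {a : Fin (m+1) → ℕ // d * ∑ i, a i ≤ k}
      = Nat.card {a : Fin m → ℕ // d * ∑ i, a i ≤ k}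
        + if d ≤ k then Nat.card {a : Fin (m+1) → ℕ // d * ∑ i, a i ≤ k - d} else 0 := by
  haveI := finite_S d (m+1) k hd
  have h0 : Nat.card {a : Fin (m+1) → ℕ // d * ∑ i, a i ≤ k}
      = Nat.card {x : {a : Fin (m+1) → ℕ // d * ∑ i, a i ≤ k} // x.1 (Fin.last m) = 0}
        + Nat.card {x : {a : Fin (m+1) → ℕ // d * ∑ i, a i ≤ k} // ¬ x.1 (Fin.last m) = 0} := by
    classical
    haveI : Finite {x : {a : Fin (m+1) → ℕ // d * ∑ i, a i ≤ k} // x.1 (Fin.last m) = 0} :=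
      Subtype.finite
    haveI : Finite {x : {a : Fin (m+1) → ℕ // d * ∑ i, a i ≤ k} // ¬ x.1 (Fin.last m) = 0} :=
      Subtype.finite
    rw [Nat.card_congr (Equiv.sumCompl
      (fun x : {a : Fin (m+1) → ℕ // d * ∑ i, a i ≤ k} => x.1 (Fin.last m) = 0)).symm,
      Nat.card_sum]
  rw [h0, card_S_last_zero]
  by_cases h : d ≤ k
  · rw [if_pos h, card_S_last_pos d m k hd h]
  · rw [if_neg h, card_S_last_pos_empty d m k hd (not_le.mp h), add_zero]




lemma lap_apply (m : ℕ) (f : Fin (m+1) → ℤ) (v : Fin (m+1)) :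
    ((⊤ : SimpleGraph (Fin (m+1))).lapMatrix ℤ).mulVec f v = (m+1) * f v - ∑ u, f u := by
  rw [lapMatrix_mulVec_apply]
  have h1 : (⊤ : SimpleGraph (Fin (m+1))).neighborFinset v = Finset.univ.erase v := by
    ext u
    simp [adj_comm, eq_comm, ne_comm]
  rw [h1, complete_graph_degree, Fintype.card_fin]
  rw [Finset.sum_erase_eq_sub (Finset.mem_univ v)]
  push_cast [Nat.add_sub_cancel]
  ring

lemma lap_sum (m : ℕ) (f : Fin (m+1) → ℤ) :
    ∑ v, ((⊤ : SimpleGraph (Fin (m+1))).lapMatrix ℤ).mulVec f v = 0 := by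
  simp only [lap_apply, Finset.sum_sub_distrib, ← Finset.mul_sum, Finset.sum_const,
    Finset.card_univ, Fintype.card_fin, nsmul_eq_mul]
  push_cast
  ring




lemma P_step (d m : ℕ) (hd : 1 ≤ d) :
    (PowerSeries.mk fun k => (Nat.card {a : Fin (m+1) → ℕ // d * ∑ i, a i ≤ k} : ℤ)) * (1 - X ^ d)
      = PowerSeries.mk fun k => (Nat.card {a : Fin m → ℕ // d * ∑ i, a i ≤ k} : ℤ) := by
  ext k
  rw [mul_sub, mul_one, map_sub, coeff_mul_X_pow', coeff_mk, coeff_mk]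
  rw [card_S_succ d m k hd]
  by_cases h : d ≤ k
  · rw [if_pos h, if_pos h, coeff_mk]
    push_cast
    ring
  · rw [if_neg h, if_neg h, coeff_mk]
    push_cast
    ring

lemma P_inv (d : ℕ) (hd : 1 ≤ d) (m : ℕ) :
    (PowerSeries.mk fun k => (Nat.card {a : Fin m → ℕ // d * ∑ i, a i ≤ k} : ℤ))
      * ((1 - X ^ d) ^ m * (1 - X)) = 1 := by
  induction m with
  | zero =>
    have h1 : (PowerSeries.mk fun k => (Nat.card {a : Fin 0 → ℕ // d * ∑ i, a i ≤ k} : ℤ))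
        = PowerSeries.mk fun k => if 1 ∣ k then (1:ℤ) else 0 := by
      ext k
      rw [coeff_mk, coeff_mk, if_pos (one_dvd k)]
      haveI : Unique {a : Fin 0 → ℕ // d * ∑ i, a i ≤ k} :=
        ⟨⟨⟨finZeroElim, by simp⟩⟩, fun x => Subtype.ext (funext fun i => i.elim0)⟩
      rw [Nat.card_unique]
      norm_num
    rw [h1, pow_zero, one_mul]
    have h2 := geom_inv 1 le_rfl
    rwa [pow_one] at h2
  | succ m ih =>
    have : (PowerSeries.mk fun k => (Nat.card {a : Fin (m+1) → ℕ // d * ∑ i, a i ≤ k} : ℤ))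
        * ((1 - X ^ d) ^ (m+1) * (1 - X))
        = ((PowerSeries.mk fun k => (Nat.card {a : Fin (m+1) → ℕ // d * ∑ i, a i ≤ k} : ℤ))
            * (1 - X ^ d)) * ((1 - X ^ d) ^ m * (1 - X)) := by ring
    rw [this, P_step d m hd, ih]




def Fmap (m k : ℕ) (q : Fin (m+1))
    (x : {ra : Fin (m+1) × (Fin m → ℕ) // (ra.1 : ℕ) * m + (m+1) * ∑ i, ra.2 i ≤ k}) :
    {E : Fin (m+1) → ℤ // (∀ v, 0 ≤ E v) ∧ ∃ f : Fin (m+1) → ℤ,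
      E - Pi.single q (k : ℤ) = ((⊤ : SimpleGraph (Fin (m+1))).lapMatrix ℤ).mulVec f} := by
  refine ⟨Fin.insertNth q ((k : ℤ) - (((x.1.1 : ℕ) * m + (m+1) * ∑ i, x.1.2 i : ℕ) : ℤ))
    (fun i => (((x.1.1 : ℕ) + (m+1) * x.1.2 i : ℕ) : ℤ)), ?_, ?_⟩
  · rw [Fin.forall_iff_succAbove q]
    constructor
    · rw [Fin.insertNth_apply_same]
      have h := x.2
      have h2 : (((x.1.1 : ℕ) * m + (m+1) * ∑ i, x.1.2 i : ℕ) : ℤ) ≤ (k : ℤ) := by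
        exact_mod_cast h
      omega
    · intro i
      rw [Fin.insertNth_apply_succAbove]
      positivity
  · refine ⟨Fin.insertNth q (-(((x.1.1 : ℕ) : ℤ) + ∑ i, (x.1.2 i : ℤ)))
      (fun i => (x.1.2 i : ℤ)), ?_⟩
    funext v
    rw [Pi.sub_apply, lap_apply]
    have hsum : ∑ u, Fin.insertNth q (-(((x.1.1 : ℕ) : ℤ) + ∑ i, (x.1.2 i : ℤ)))
        (fun i => (x.1.2 i : ℤ)) u = -((x.1.1 : ℕ) : ℤ) := by
      rw [Fin.sum_univ_succAbove _ q]
      simp only [Fin.insertNth_apply_same, Fin.insertNth_apply_succAbove]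
      ring
    rw [hsum]
    rcases eq_or_ne v q with rfl | hv
    · rw [Fin.insertNth_apply_same, Fin.insertNth_apply_same, Pi.single_eq_same]
      push_cast
      ring
    · obtain ⟨i, rfl⟩ := Fin.exists_succAbove_eq hv
      rw [Fin.insertNth_apply_succAbove, Fin.insertNth_apply_succAbove,
        Pi.single_eq_of_ne (Fin.succAbove_ne q i)]
      push_cast
      ring



lemma Fmap_val (m k : ℕ) (q : Fin (m+1)) (x) :
    (Fmap m k q x).1 = Fin.insertNth q
      ((k : ℤ) - (((x.1.1 : ℕ) * m + (m+1) * ∑ i, x.1.2 i : ℕ) : ℤ))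
      (fun i => (((x.1.1 : ℕ) + (m+1) * x.1.2 i : ℕ) : ℤ)) := rfl

lemma Fmap_inj (m k : ℕ) (q : Fin (m+1)) : Function.Injective (Fmap m k q) := by
  rintro ⟨⟨r, a⟩, h⟩ ⟨⟨r', a'⟩, h'⟩ hEq
  have hE := congrArg Subtype.val hEq
  rw [Fmap_val, Fmap_val] at hE
  have hsA : ∀ i : Fin m, (r : ℕ) + (m+1) * a i = (r' : ℕ) + (m+1) * a' i := by
    intro i
    have h2 := congrFun hE (q.succAbove i)
    rw [Fin.insertNth_apply_succAbove, Fin.insertNth_apply_succAbove] at h2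
    exact_mod_cast h2
  cases m with
  | zero =>
    have hr : r = r' := Fin.ext (by omega)
    have ha : a = a' := funext fun i => i.elim0
    apply Subtype.ext
    show (r, a) = (r', a')
    rw [hr, ha]
  | succ m' =>
    have h0 := hsA 0
    have hr : (r : ℕ) = (r' : ℕ) := by
      have e1 : ((r:ℕ) + (m'+1+1) * a 0) % (m'+1+1) = (r:ℕ) := by
        rw [Nat.add_mul_mod_self_left, Nat.mod_eq_of_lt r.isLt]
      have e2 : ((r':ℕ) + (m'+1+1) * a' 0) % (m'+1+1) = (r':ℕ) := by
        rw [Nat.add_mul_mod_self_left, Nat.mod_eq_of_lt r'.isLt]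
      rw [← e1, ← e2, h0]
    have ha : a = a' := by
      funext i
      have := hsA i
      rw [hr] at this
      have h3 : (m'+1+1) * a i = (m'+1+1) * a' i := by omega
      exact Nat.eq_of_mul_eq_mul_left (by omega) h3
    apply Subtype.ext
    show (r, a) = (r', a')
    rw [Fin.val_inj.mp hr, ha]



lemma Fmap_surj (m k : ℕ) (q : Fin (m+1)) : Function.Surjective (Fmap m k q) := by
  rintro ⟨E, hpos, f, hf⟩
  set s : ℤ := ∑ v, f v with hs
  have hE : ∀ v, E v - Pi.single (M := fun _ : Fin (m+1) => ℤ) q (k:ℤ) v = (m+1) * f v - s := by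
    intro v
    have h1 := congrFun hf v
    rwa [Pi.sub_apply, lap_apply] at h1
  have hm : (0:ℤ) < (m+1 : ℤ) := by positivity
  set r0 : ℤ := (-s) % (m+1) with hr0
  have hr0nn : 0 ≤ r0 := Int.emod_nonneg _ (by omega)
  have hr0lt : r0 < (m+1:ℤ) := Int.emod_lt_of_pos _ hm
  set t : ℤ := (-s) / (m+1) with ht
  have hst : -s = (m+1) * t + r0 := by
    rw [hr0, ht]; exact (Int.mul_ediv_add_emod (-s) (m+1)).symm
  have hEsA : ∀ i : Fin m, E (q.succAbove i) = (m+1) * (f (q.succAbove i) + t) + r0 := by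
    intro i
    have h1 := hE (q.succAbove i)
    rw [Pi.single_eq_of_ne (Fin.succAbove_ne q i), sub_zero] at h1
    rw [h1]; linarith [hst]
  have hft : ∀ i : Fin m, 0 ≤ f (q.succAbove i) + t := by
    intro i
    by_contra hneg
    push_neg at hneg
    have h1 : f (q.succAbove i) + t ≤ -1 := by omega
    have h2 : (m+1:ℤ) * (f (q.succAbove i) + t) ≤ (m+1) * (-1) :=
      mul_le_mul_of_nonneg_left h1 (by positivity)
    have h3 := hpos (q.succAbove i)
    rw [hEsA i] at h3
    linarith
  have hsumE : ∑ v, E v = (k:ℤ) := by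
    have h1 : ∑ v, (E v - Pi.single (M := fun _ : Fin (m+1) => ℤ) q (k:ℤ) v) = ∑ v, ((m+1 : ℤ) * f v - s) :=
      Finset.sum_congr rfl (fun v _ => hE v)
    rw [Finset.sum_sub_distrib, Finset.sum_sub_distrib, Finset.sum_pi_single',
      if_pos (Finset.mem_univ q), ← Finset.mul_sum, ← hs, Finset.sum_const,
      Finset.card_univ, Fintype.card_fin, nsmul_eq_mul] at h1
    push_cast at h1
    linarith
  have hEq : E q = (k:ℤ) - ((m:ℤ) * r0 + (m+1) * ∑ i, (f (q.succAbove i) + t)) := by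
    have h1 : ∑ v, E v = E q + ∑ i, E (q.succAbove i) := Fin.sum_univ_succAbove E q
    have h2 : ∑ i, E (q.succAbove i) = (m+1) * ∑ i, (f (q.succAbove i) + t) + (m:ℤ) * r0 := by
      rw [Finset.sum_congr rfl (fun i _ => hEsA i), Finset.sum_add_distrib,
        Finset.sum_const, Finset.card_univ, Fintype.card_fin, nsmul_eq_mul,
        ← Finset.mul_sum]
    rw [hsumE, h2] at h1
    linarith
  have hcast : ((r0.toNat * m + (m+1) * ∑ i, (f (q.succAbove i) + t).toNat : ℕ) : ℤ)
      = (m:ℤ) * r0 + (m+1) * ∑ i, (f (q.succAbove i) + t) := by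
    push_cast
    rw [Finset.sum_congr rfl (fun i (_ : i ∈ Finset.univ) => Int.toNat_of_nonneg (hft i)),
      Int.toNat_of_nonneg hr0nn]
    ring
  have hcond : r0.toNat * m + (m+1) * ∑ i, (f (q.succAbove i) + t).toNat ≤ k := by
    have h1 := hpos q
    rw [hEq] at h1
    have h2 : ((r0.toNat * m + (m+1) * ∑ i, (f (q.succAbove i) + t).toNat : ℕ) : ℤ) ≤ (k:ℤ) := by
      rw [hcast]; linarith
    exact_mod_cast h2
  refine ⟨⟨⟨⟨r0.toNat, by omega⟩, fun i => (f (q.succAbove i) + t).toNat⟩, hcond⟩, ?_⟩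
  apply Subtype.ext
  rw [Fmap_val]
  change _ = E
  funext v
  rcases eq_or_ne v q with rfl | hv
  · rw [Fin.insertNth_apply_same]
    show (k:ℤ) - ((r0.toNat * m + (m+1) * ∑ i, (f (v.succAbove i) + t).toNat : ℕ) : ℤ) = E v
    rw [hEq, hcast]
  · obtain ⟨i, rfl⟩ := Fin.exists_succAbove_eq hv
    rw [Fin.insertNth_apply_succAbove]
    show ((r0.toNat + (m+1) * (f (q.succAbove i) + t).toNat : ℕ) : ℤ) = E (q.succAbove i)
    rw [hEsA i]
    push_cast [Int.toNat_of_nonneg (hft i), Int.toNat_of_nonneg hr0nn]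
    ring




lemma natCard_sigma {ι : Type*} [Fintype ι] (β : ι → Type*) [∀ i, Finite (β i)] :
    Nat.card ((i : ι) × β i) = ∑ i, Nat.card (β i) := by
  haveI := fun i => Fintype.ofFinite (β i)
  simp only [Nat.card_eq_fintype_card]
  exact Fintype.card_sigma

lemma card_T (m k : ℕ) :
    (Nat.card {ra : Fin (m+1) × (Fin m → ℕ) // (ra.1 : ℕ) * m + (m+1) * ∑ i, ra.2 i ≤ k} : ℤ)
      = ∑ r ∈ Finset.range (m+1), if r * m ≤ k
          then (Nat.card {a : Fin m → ℕ // (m+1) * ∑ i, a i ≤ k - r * m} : ℤ) else 0 := by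
  have e1 : {ra : Fin (m+1) × (Fin m → ℕ) // (ra.1 : ℕ) * m + (m+1) * ∑ i, ra.2 i ≤ k}
      ≃ (r : Fin (m+1)) × {a : Fin m → ℕ // (r : ℕ) * m + (m+1) * ∑ i, a i ≤ k} :=
    ⟨fun x => ⟨x.1.1, x.1.2, x.2⟩, fun y => ⟨(y.1, y.2.1), y.2.2⟩,
      fun x => rfl, fun y => rfl⟩
  haveI : ∀ r : Fin (m+1), Finite {a : Fin m → ℕ // (r : ℕ) * m + (m+1) * ∑ i, a i ≤ k} := by
    intro r
    haveI := finite_S (m+1) m k (by omega)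
    apply Finite.of_injective (β := {a : Fin m → ℕ // (m+1) * ∑ i, a i ≤ k})
      (fun a => ⟨a.1, by have h := a.2; omega⟩)
    intro a b hab
    have := congrArg Subtype.val hab
    exact Subtype.ext this
  rw [Nat.card_congr e1, natCard_sigma, Nat.cast_sum,
    ← Fin.sum_univ_eq_sum_range (fun r => if r * m ≤ k
      then (Nat.card {a : Fin m → ℕ // (m+1) * ∑ i, a i ≤ k - r * m} : ℤ) else 0) (m+1)]
  apply Finset.sum_congr rfl
  intro r _
  by_cases h : (r : ℕ) * m ≤ k
  · rw [if_pos h]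
    congr 1
    apply Nat.card_congr
    apply Equiv.subtypeEquivRight
    intro a
    have hx : (r : ℕ) * m + (m+1) * ∑ i, a i ≤ k ↔ (m+1) * ∑ i, a i ≤ k - (r : ℕ) * m := by
      omega
    exact hx
  · rw [if_neg h]
    haveI : IsEmpty {a : Fin m → ℕ // (r : ℕ) * m + (m+1) * ∑ i, a i ≤ k} :=
      ⟨fun a => h (by have := a.2; omega)⟩
    rw [Nat.card_of_isEmpty, Nat.cast_zero]

end Stmt8Aux

/-- For the complete graph `K_n` with fixed vertex `q`,
`∑_{k≥0} #|kq| z^k = (∑_{k=0}^{n-1} z^{k(n-1)}) / ((1-z^n)^{n-1}(1-z))`. -/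
theorem stmt8 (n : ℕ) (hn : 1 ≤ n) (q : Fin n) :
    (PowerSeries.mk fun k =>
        (Nat.card {E : Fin n → ℤ // (∀ v, 0 ≤ E v) ∧
          ∃ f : Fin n → ℤ,
            E - Pi.single q (k : ℤ)
              = ((⊤ : SimpleGraph (Fin n)).lapMatrix ℤ).mulVec f} : ℤ))
      * ((1 - (PowerSeries.X : PowerSeries ℤ) ^ n) ^ (n - 1)
          * (1 - (PowerSeries.X : PowerSeries ℤ)))
    = ∑ k ∈ Finset.range n, (PowerSeries.X : PowerSeries ℤ) ^ (k * (n - 1)) := by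
  obtain ⟨m, rfl⟩ : ∃ m, n = m + 1 := ⟨n - 1, (Nat.succ_pred_eq_of_pos hn).symm⟩
  simp only [Nat.add_sub_cancel]
  have card_E_eq_T : ∀ k : ℕ,
      Nat.card {E : Fin (m+1) → ℤ // (∀ v, 0 ≤ E v) ∧ ∃ f : Fin (m+1) → ℤ,
        E - Pi.single q (k : ℤ) = ((⊤ : SimpleGraph (Fin (m+1))).lapMatrix ℤ).mulVec f}
      = Nat.card {ra : Fin (m+1) × (Fin m → ℕ) //
          (ra.1 : ℕ) * m + (m+1) * ∑ i, ra.2 i ≤ k} := fun k =>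
    (Nat.card_eq_of_bijective (Stmt8Aux.Fmap m k q)
      ⟨Stmt8Aux.Fmap_inj m k q, Stmt8Aux.Fmap_surj m k q⟩).symm
  have hmk : (PowerSeries.mk fun k =>
        (Nat.card {E : Fin (m+1) → ℤ // (∀ v, 0 ≤ E v) ∧
          ∃ f : Fin (m+1) → ℤ,
            E - Pi.single q (k : ℤ)
              = ((⊤ : SimpleGraph (Fin (m+1))).lapMatrix ℤ).mulVec f} : ℤ))
      = ∑ r ∈ Finset.range (m+1), (X : PowerSeries ℤ) ^ (r*m)
          * (PowerSeries.mk fun k =>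
              (Nat.card {a : Fin m → ℕ // (m+1) * ∑ i, a i ≤ k} : ℤ)) := by
    ext k
    rw [coeff_mk, map_sum, card_E_eq_T k, Stmt8Aux.card_T m k]
    apply Finset.sum_congr rfl
    intro r _
    rw [coeff_X_pow_mul']
    by_cases h : r * m ≤ k
    · rw [if_pos h, if_pos h, coeff_mk]
    · rw [if_neg h, if_neg h]
  rw [hmk, Finset.sum_mul]
  apply Finset.sum_congr rfl
  intro r _
  rw [mul_assoc, Stmt8Aux.P_inv (m+1) (by omega) m, mul_one]
end

section
/- For the complete graph K_n, let λ(k) = #|kq| and Δλ(k) = λ(k+1) − λ(k). If k = an + b with 0 ≤ b < n, then Δλ(k) = C(a+b, n−2). -/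
open SimpleGraph Finset


lemma lap_top (n : ℕ) (f : Fin n → ℤ) (i : Fin n) :
    (((⊤ : SimpleGraph (Fin n)).lapMatrix ℤ).mulVec f) i = n * f i - ∑ j, f j := by
  rw [SimpleGraph.lapMatrix_mulVec_apply]
  have h2 : (⊤ : SimpleGraph (Fin n)).neighborFinset i = Finset.univ.erase i := by
    ext j; simp [eq_comm, ne_comm]
  have h3 : ∑ u ∈ (⊤ : SimpleGraph (Fin n)).neighborFinset i, f u = (∑ j, f j) - f i := by
    rw [h2, Finset.sum_erase_eq_sub (Finset.mem_univ i)]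
  have h4 : ((⊤ : SimpleGraph (Fin n)).degree i : ℤ) = (n : ℤ) - 1 := by
    have : 1 ≤ n := Nat.one_le_iff_ne_zero.2 (by rintro rfl; exact i.elim0)
    simp [Nat.cast_sub this]
  rw [h3, h4]; ring

lemma lap_image (n : ℕ) (hn : 0 < n) (q : Fin n) (v : Fin n → ℤ) :
    (∃ f, v = ((⊤ : SimpleGraph (Fin n)).lapMatrix ℤ).mulVec f) ↔
      (∑ i, v i = 0 ∧ ∀ i, (n : ℤ) ∣ v i - v q) := by
  have hn' : (n : ℤ) ≠ 0 := by exact_mod_cast hn.ne'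
  constructor
  · rintro ⟨f, rfl⟩
    constructor
    · simp only [lap_top]
      rw [Finset.sum_sub_distrib, ← Finset.mul_sum]
      simp [Finset.card_univ, mul_comm]
    · intro i
      simp only [lap_top]
      exact ⟨f i - f q, by ring⟩
  · rintro ⟨hsum, hdvd⟩
    refine ⟨fun i => (v i - v q) / n, funext fun i => ?_⟩
    rw [lap_top]
    have key : ∀ j, (n : ℤ) * ((v j - v q) / n) = v j - v q := fun j =>
      Int.mul_ediv_cancel' (hdvd j)
    have hS : (n : ℤ) * (∑ j, (v j - v q) / n) = -(n * v q) := by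
      rw [Finset.mul_sum]
      simp only [key]
      rw [Finset.sum_sub_distrib, hsum]
      simp [Finset.card_univ]
    have h5 : (∑ j, (v j - v q) / n) = -v q := by
      have := mul_left_cancel₀ hn' (hS.trans (by ring_nf : -((n:ℤ) * v q) = n * (-v q)))
      linarith [this]
    rw [key i, h5]; ring

/-- key condition characterization -/
lemma cond_iff (n : ℕ) (hn : 0 < n) (q : Fin n) (k : ℕ) (E : Fin n → ℤ) :
    ((∀ v, 0 ≤ E v) ∧ ∃ f : Fin n → ℤ,
        E - Pi.single q (k : ℤ) = ((⊤ : SimpleGraph (Fin n)).lapMatrix ℤ).mulVec f) ↔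
      ((∀ v, 0 ≤ E v) ∧ ∑ i, E i = k ∧
        ∀ i, i ≠ q → (n : ℤ) ∣ E i - E q + k) := by
  rw [and_congr_right_iff]
  intro _
  rw [lap_image n hn q]
  have hsum : ∑ i, (E - Pi.single q (k:ℤ) : Fin n → ℤ) i = (∑ i, E i) - k := by
    simp only [Pi.sub_apply, Finset.sum_sub_distrib]
    simp
  constructor
  · rintro ⟨hs, hd⟩
    constructor
    · rw [hsum] at hs; linarith
    · intro i hi
      have := hd i
      simp only [Pi.sub_apply, Pi.single_apply, if_neg hi, if_pos rfl, if_true] at this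
      convert this using 1; ring
  · rintro ⟨hs, hd⟩
    constructor
    · rw [hsum, hs]; ring
    · intro i
      by_cases hi : i = q
      · subst hi; simp
      · have := hd i hi
        simp only [Pi.sub_apply, Pi.single_apply, if_neg hi, if_pos rfl, if_true]
        convert this using 1; ring


lemma card_ne (n : ℕ) (q : Fin n) : Fintype.card {i : Fin n // i ≠ q} = n - 1 := by
  simp [Fintype.card_subtype_compl]

lemma sum_split {n : ℕ} (q : Fin n) {M : Type*} [AddCommMonoid M] (g : Fin n → M) :
    ∑ i, g i = g q + ∑ i : {i : Fin n // i ≠ q}, g (i : Fin n) := by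
  rw [← Finset.add_sum_erase _ _ (Finset.mem_univ q)]
  congr 1
  rw [← Finset.sum_subtype (Finset.univ.erase q) (fun x => by simp) g]

lemma nat_unique {n r r' x x' : ℕ} (hr : r < n) (hr' : r' < n) (h : n*x + r = n*x'+r') :
    r = r' ∧ x = x' := by
  have h1 : (n*x+r) % n = r := by simp [Nat.mul_add_mod, Nat.mod_eq_of_lt hr]
  have h2 : (n*x'+r') % n = r' := by simp [Nat.mul_add_mod, Nat.mod_eq_of_lt hr']
  have hrr : r = r' := by rw [← h1, ← h2, h]
  refine ⟨hrr, ?_⟩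
  subst hrr
  have : n * x = n * x' := by omega
  exact Nat.eq_of_mul_eq_mul_left (by omega) this


variable (n : ℕ) (q : Fin n) (k : ℕ)

/-- weight function -/
def wtF (p : Fin n × ({i : Fin n // i ≠ q} → ℕ)) : ℕ :=
  (n-1) * (p.1 : ℕ) + n * ∑ i, p.2 i

/-- the divisor attached to (r, x) -/
def phiFun (p : Fin n × ({i : Fin n // i ≠ q} → ℕ)) : Fin n → ℤ :=
  fun i => if h : i = q then ((k:ℤ) - (wtF n q p : ℕ))
    else ((n * p.2 ⟨i, h⟩ + (p.1 : ℕ) : ℕ) : ℤ)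

lemma phiFun_apply_q (p : Fin n × ({i : Fin n // i ≠ q} → ℕ)) :
    phiFun n q k p q = (k:ℤ) - (wtF n q p : ℕ) := dif_pos rfl

lemma phiFun_apply_ne (p : Fin n × ({i : Fin n // i ≠ q} → ℕ)) {i : Fin n} (h : i ≠ q) :
    phiFun n q k p i = ((n * p.2 ⟨i, h⟩ + (p.1 : ℕ) : ℕ) : ℤ) := dif_neg h

lemma phiFun_mem (hn : 2 ≤ n) (p : Fin n × ({i : Fin n // i ≠ q} → ℕ))
    (hle : wtF n q p ≤ k) :
    (∀ v, 0 ≤ phiFun n q k p v) ∧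
      ∃ f : Fin n → ℤ, phiFun n q k p - Pi.single q (k : ℤ)
        = ((⊤ : SimpleGraph (Fin n)).lapMatrix ℤ).mulVec f := by
  obtain ⟨r, x⟩ := p
  have hn0 : 0 < n := by omega
  rw [cond_iff n hn0 q k]
  have hpos : ∀ v, (0:ℤ) ≤ phiFun n q k (r, x) v := by
    intro v
    by_cases h : v = q
    · rw [h, phiFun_apply_q]
      have : ((wtF n q (r,x) : ℕ) : ℤ) ≤ (k : ℤ) := by exact_mod_cast hle
      linarith
    · rw [phiFun_apply_ne n q k _ h]
      positivity
  refine ⟨hpos, ?_, ?_⟩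
  · rw [sum_split q, phiFun_apply_q]
    have hc : ∀ i : {i : Fin n // i ≠ q},
        phiFun n q k (r, x) (i : Fin n) = ((n * x i + (r : ℕ) : ℕ) : ℤ) := by
      rintro ⟨i, hi⟩
      rw [phiFun_apply_ne n q k _ hi]
    rw [Finset.sum_congr rfl (fun i _ => hc i)]
    have hsx : ∑ i : {i : Fin n // i ≠ q}, ((n * x i + (r : ℕ) : ℕ) : ℤ)
        = ((wtF n q (r,x) : ℕ) : ℤ) := by
      rw [← Nat.cast_sum]
      congr 1
      rw [Finset.sum_add_distrib, ← Finset.mul_sum, Finset.sum_const, Finset.card_univ,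
        card_ne n q]
      unfold wtF
      simp only [smul_eq_mul]
      omega
    rw [hsx]; ring
  · rintro i hi
    rw [phiFun_apply_ne n q k _ hi, phiFun_apply_q]
    refine ⟨((x ⟨i, hi⟩ + (r:ℕ) + ∑ j, x j : ℕ) : ℤ), ?_⟩
    have hnat : n * x ⟨i, hi⟩ + (r:ℕ) + wtF n q (r, x)
        = n * (x ⟨i, hi⟩ + (r:ℕ) + ∑ j, x j) := by
      have h1 : (r:ℕ) + (n-1) * (r:ℕ) = n * (r:ℕ) := by
        calc (r:ℕ) + (n-1) * (r:ℕ) = (1 + (n-1)) * (r:ℕ) := by ring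
        _ = n * (r:ℕ) := by congr 1; omega
      unfold wtF
      simp only []
      rw [Nat.mul_add, Nat.mul_add]
      omega
    have h9 := congrArg (fun m : ℕ => (m : ℤ)) hnat
    push_cast at h9
    push_cast
    linarith [h9]

lemma card_eq (hn : 2 ≤ n) :
    Nat.card {E : Fin n → ℤ // (∀ v, 0 ≤ E v) ∧
        ∃ f : Fin n → ℤ, E - Pi.single q (k : ℤ)
            = ((⊤ : SimpleGraph (Fin n)).lapMatrix ℤ).mulVec f} =
    Nat.card {p : Fin n × ({i : Fin n // i ≠ q} → ℕ) // wtF n q p ≤ k} := by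
  have hn0 : 0 < n := by omega
  symm
  apply Nat.card_eq_of_bijective (fun p => ⟨phiFun n q k p.1, phiFun_mem n q k hn p.1 p.2⟩)
  obtain ⟨i₀, hi₀⟩ : ∃ i : Fin n, i ≠ q :=
    Fintype.exists_ne_of_one_lt_card (by simp; omega) q
  constructor
  · rintro ⟨⟨r, x⟩, h1⟩ ⟨⟨r', x'⟩, h2⟩ hpq
    have hfun : phiFun n q k (r, x) = phiFun n q k (r', x') :=
      congrArg Subtype.val hpq
    have heq : ∀ i : {i : Fin n // i ≠ q}, n * x i + (r:ℕ) = n * x' i + (r':ℕ) := by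
      rintro ⟨i, hi⟩
      have h3 := congrFun hfun i
      rw [phiFun_apply_ne n q k _ hi, phiFun_apply_ne n q k _ hi] at h3
      exact_mod_cast h3
    have hrr : (r:ℕ) = (r':ℕ) := (nat_unique r.isLt r'.isLt (heq ⟨i₀, hi₀⟩)).1
    have hxx : ∀ i, x i = x' i := by
      intro i
      have h4 := heq i
      have h5 : n * x i = n * x' i := by omega
      exact Nat.eq_of_mul_eq_mul_left (by omega) h5
    apply Subtype.ext
    exact Prod.ext (Fin.ext hrr) (funext hxx)
  · rintro ⟨E, hE⟩
    rw [cond_iff n hn0 q k] at hE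
    obtain ⟨hpos, hsum, hdvd⟩ := hE
    have hNE : ∀ i, ((E i).toNat : ℤ) = E i := fun i => Int.toNat_of_nonneg (hpos i)
    set N : Fin n → ℕ := fun i => (E i).toNat with hN
    set r : ℕ := N i₀ % n with hr
    have hrlt : r < n := Nat.mod_lt _ hn0
    have hmod : ∀ i : Fin n, i ≠ q → N i % n = r := by
      intro i hi
      have d : (n:ℤ) ∣ (N i₀ : ℤ) - N i := by
        have d1 := hdvd i hi
        have d2 := hdvd i₀ hi₀
        have h5 : ((N i₀ : ℤ) - N i) = (E i₀ - E q + k) - (E i - E q + k) := by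
          rw [show ((N i₀ : ℕ) : ℤ) = E i₀ from hNE i₀, show ((N i : ℕ) : ℤ) = E i from hNE i]
          ring
        rw [h5]
        exact dvd_sub d2 d1
      exact ((Nat.modEq_iff_dvd).2 d : N i ≡ N i₀ [MOD n])
    set x : {i : Fin n // i ≠ q} → ℕ := fun i => N i / n with hx
    have hrep : ∀ i : {i : Fin n // i ≠ q}, N (i : Fin n) = n * x i + r := by
      rintro ⟨i, hi⟩
      have : N i / n = x ⟨i, hi⟩ := rfl
      rw [← this, ← hmod i hi]
      exact (Nat.div_add_mod (N i) n).symm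
    have hsumN : ∑ i, N i = k := by
      have h6 : ((∑ i, N i : ℕ) : ℤ) = (k : ℤ) := by
        push_cast
        simpa only [hN, hNE] using hsum
      exact_mod_cast h6
    have hsplit : ∑ i, N i = N q + ∑ i : {i : Fin n // i ≠ q}, N (i : Fin n) := sum_split q N
    have hwt_eq : ∑ i : {i : Fin n // i ≠ q}, N (i : Fin n) = wtF n q (⟨r, hrlt⟩, x) := by
      rw [Finset.sum_congr rfl (fun i _ => hrep i), Finset.sum_add_distrib,
        ← Finset.mul_sum, Finset.sum_const, Finset.card_univ, card_ne n q]
      unfold wtF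
      simp only [smul_eq_mul]
      omega
    have hle : wtF n q (⟨r, hrlt⟩, x) ≤ k := by omega
    refine ⟨⟨(⟨r, hrlt⟩, x), hle⟩, ?_⟩
    apply Subtype.ext
    show phiFun n q k (⟨r, hrlt⟩, x) = E
    funext i
    by_cases h : i = q
    · rw [h, phiFun_apply_q, ← hNE q]
      have h7 : wtF n q (⟨r, hrlt⟩, x) + N q = k := by omega
      have h8 := congrArg (fun m : ℕ => (m : ℤ)) h7
      push_cast at h8
      linarith
    · rw [phiFun_apply_ne n q k _ h, ← hNE i]
      exact_mod_cast (hrep ⟨i, h⟩).symm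


/-- stars and bars -/
lemma count_sum_eq (ι : Type*) [Fintype ι] [DecidableEq ι] (m : ℕ) :
    Nat.card {x : ι → ℕ // ∑ i, x i = m} = (Fintype.card ι + m - 1).choose m := by
  have e : {x : ι → ℕ // ∑ i, x i = m} ≃ {x // x ∈ Finset.piAntidiag (univ : Finset ι) m} :=
    Equiv.subtypeEquivRight (fun x => by simp [Finset.mem_piAntidiag])
  rw [Nat.card_congr e, Nat.card_eq_finsetCard]
  rw [← Finset.map_sym_eq_piAntidiag (univ : Finset ι) m, Finset.card_map,
    Finset.sym_univ, Finset.card_univ, Sym.card_sym_eq_choose]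

/-- key arithmetic -/
lemma key_arith (n a b r S : ℕ) (hn : 2 ≤ n) (hb : b < n) (hr : r < n) :
    (n-1)*r + n*S = a*n+b+1 ↔ (r = n-1-b ∧ S + (n-1-b) = a+1) := by
  have hmc : a * n = n * a := Nat.mul_comm a n
  constructor
  · intro h
    have hr' : (n-1)*r + r = n*r := by
      calc (n-1)*r + r = ((n-1)+1)*r := by ring
      _ = n*r := by congr 1; omega
    have h2 : n*r + n*S = a*n + (b + 1 + r) := by omega
    have h2' : n*(r+S) = a*n + (b+1+r) := by rw [Nat.mul_add]; omega
    have h3 : a < r + S := by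
      have : a*n < (r+S)*n := by rw [Nat.mul_comm (r+S) n]; omega
      exact Nat.lt_of_mul_lt_mul_right this
    have hcs : r + S = a + (r + S - a) := by omega
    have h4 : n * (r + S - a) = b + 1 + r := by
      rw [hcs, Nat.mul_add] at h2'; omega
    have h5 : r + S - a < 2 := by
      by_contra hc
      have h6 : n*2 ≤ n*(r+S-a) := Nat.mul_le_mul_left n (by omega)
      omega
    have h7 : r + S - a = 1 := by omega
    rw [h7, Nat.mul_one] at h4
    omega
  · rintro ⟨rfl, hS⟩
    have h1 : (n-1)*(n-1-b) + (n-1-b) = n*(n-1-b) := by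
      calc (n-1)*(n-1-b) + (n-1-b) = ((n-1)+1)*(n-1-b) := by ring
      _ = n*(n-1-b) := by congr 1; omega
    have h2 : n*S + n*(n-1-b) = n*a + n := by
      rw [← Nat.mul_add, hS, Nat.mul_add, Nat.mul_one]
    omega


lemma finite_wt (hn : 2 ≤ n) : Finite {p : Fin n × ({i : Fin n // i ≠ q} → ℕ) // wtF n q p ≤ k} := by
  apply Finite.of_injective (fun p => ((p.1.1 : Fin n),
    fun i : {i : Fin n // i ≠ q} => (⟨p.1.2 i, by
      have h1 : p.1.2 i ≤ ∑ j, p.1.2 j := Finset.single_le_sum (fun j _ => Nat.zero_le _) (Finset.mem_univ i)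
      have h2 : n * ∑ j, p.1.2 j ≤ k := le_trans (Nat.le_add_left _ _) p.2
      have h3 : ∑ j, p.1.2 j ≤ n * ∑ j, p.1.2 j := Nat.le_mul_of_pos_left _ (by omega)
      omega⟩ : Fin (k+1))))
  rintro ⟨⟨r, x⟩, h1⟩ ⟨⟨r', x'⟩, h2⟩ h
  simp only [Prod.mk.injEq] at h
  apply Subtype.ext
  refine Prod.ext h.1 (funext fun i => ?_)
  have := congrFun h.2 i
  exact_mod_cast congrArg Fin.val this

lemma card_succ (hn : 2 ≤ n) :
    Nat.card {p : Fin n × ({i : Fin n // i ≠ q} → ℕ) // wtF n q p ≤ k+1} =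
      Nat.card {p : Fin n × ({i : Fin n // i ≠ q} → ℕ) // wtF n q p ≤ k} +
      Nat.card {p : Fin n × ({i : Fin n // i ≠ q} → ℕ) // wtF n q p = k+1} := by
  haveI F1 := finite_wt n q (k+1) hn
  haveI F2 := finite_wt n q k hn
  haveI F3 : Finite {p : Fin n × ({i : Fin n // i ≠ q} → ℕ) // wtF n q p = k+1} :=
    Finite.of_injective (fun p => (⟨p.1, p.2.le⟩ :
      {p : Fin n × ({i : Fin n // i ≠ q} → ℕ) // wtF n q p ≤ k+1}))
      (by
        rintro ⟨p, hp⟩ ⟨p', hp'⟩ h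
        simp only [Subtype.mk.injEq] at h
        exact Subtype.ext h)
  rw [← Nat.card_sum]
  apply Nat.card_congr
  exact {
    toFun := fun p => if h : wtF n q p.1 ≤ k then Sum.inl ⟨p.1, h⟩
      else Sum.inr ⟨p.1, by have := p.2; omega⟩
    invFun := Sum.elim (fun p => ⟨p.1, Nat.le_succ_of_le p.2⟩) (fun p => ⟨p.1, p.2.le⟩)
    left_inv := by
      rintro ⟨p, hp⟩
      by_cases h : wtF n q p ≤ k <;> simp [h]
    right_inv := by
      rintro (⟨p, hp⟩ | ⟨p, hp⟩)
      · simp [hp]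
      · have : ¬ wtF n q p ≤ k := by omega
        simp [this] }

lemma card_level (a b : ℕ) (hn : 2 ≤ n) (hb : b < n) :
    Nat.card {p : Fin n × ({i : Fin n // i ≠ q} → ℕ) // wtF n q p = a*n+b+1} =
      (a+b).choose (n-2) := by
  have e : {p : Fin n × ({i : Fin n // i ≠ q} → ℕ) // wtF n q p = a*n+b+1} ≃
      {x : {i : Fin n // i ≠ q} → ℕ // (∑ i, x i) + (n-1-b) = a+1} := {
    toFun := fun p => ⟨p.1.2,
      ((key_arith n a b (p.1.1 : ℕ) _ hn hb p.1.1.isLt).1 p.2).2⟩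
    invFun := fun x => ⟨(⟨n-1-b, by omega⟩, x.1),
      (key_arith n a b (n-1-b) _ hn hb (by omega)).2 ⟨rfl, x.2⟩⟩
    left_inv := by
      rintro ⟨⟨r, x⟩, hp⟩
      have hr : (r : ℕ) = n-1-b := ((key_arith n a b (r : ℕ) _ hn hb r.isLt).1 hp).1
      apply Subtype.ext
      exact Prod.ext (Fin.ext hr.symm) rfl
    right_inv := fun x => rfl }
  rw [Nat.card_congr e]
  by_cases hab : n-1-b ≤ a+1
  · have e2 : {x : {i : Fin n // i ≠ q} → ℕ // (∑ i, x i) + (n-1-b) = a+1} ≃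
        {x : {i : Fin n // i ≠ q} → ℕ // ∑ i, x i = a+1-(n-1-b)} :=
      Equiv.subtypeEquivRight (fun x => by omega)
    rw [Nat.card_congr e2, count_sum_eq, card_ne n q]
    have h1 : n - 1 + (a + 1 - (n - 1 - b)) - 1 = a + b := by omega
    have h2 : n - 2 = (a + b) - (a + 1 - (n - 1 - b)) := by omega
    rw [h1, h2]
    exact (Nat.choose_symm (by omega)).symm
  · haveI : IsEmpty {x : {i : Fin n // i ≠ q} → ℕ // (∑ i, x i) + (n-1-b) = a+1} :=
      ⟨fun x => by have := x.2; omega⟩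
    rw [Nat.card_of_isEmpty, Nat.choose_eq_zero_of_lt (by omega)]


/-- For the complete graph `K_n` with `λ(k) = #|kq|`, if `k = a·n + b`
with `0 ≤ b < n`, then `λ(k+1) - λ(k) = C(a+b, n-2)`. -/
theorem stmt9 (n : ℕ) (hn : 2 ≤ n) (q : Fin n)
    (lam : ℕ → ℕ)
    (hlam : ∀ k : ℕ, lam k =
      Nat.card {E : Fin n → ℤ // (∀ v, 0 ≤ E v) ∧
        ∃ f : Fin n → ℤ,
          E - Pi.single q (k : ℤ)
            = ((⊤ : SimpleGraph (Fin n)).lapMatrix ℤ).mulVec f})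
    (a b : ℕ) (hb : b < n) :
    (lam (a * n + b + 1) : ℤ) - lam (a * n + b) = (a + b).choose (n - 2) := by
  rw [hlam (a*n+b), hlam (a*n+b+1), card_eq n q (a*n+b) hn, card_eq n q (a*n+b+1) hn,
    card_succ n q (a*n+b) hn, card_level n q a b hn hb]
  push_cast
  ring
end

section
/- Let D be a divisor of degree 0 on a finite connected graph G with n vertices (ordered with q last). Then the q-cone K_D = { (f, t) ∈ ℝ^{n−1} × ℝ : L(f,0) + t·q ≥ −D } is a rational simplicial n-cone with apex (L̃^{-1}(−D|_{q=0}), 0), and the map (f, k) ↦ D + kq + L(f,0) is a bijection from K_D ∩ ℤ^n to the set of effective divisors E with E − deg(E)q ∼ D. -/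
open SimpleGraph Matrix Finset

section auxlemmas
variable {V : Type*} [Fintype V] [DecidableEq V]

lemma stmt11_lap_sum {R : Type*} [CommRing R] (G : SimpleGraph V) [DecidableRel G.Adj]
    (x : V → R) : ∑ v, (G.lapMatrix R *ᵥ x) v = 0 := by
  simp only [Matrix.mulVec, dotProduct]
  rw [Finset.sum_comm]
  refine Finset.sum_eq_zero fun j _ => ?_
  rw [← Finset.sum_mul]
  have h : ∑ v, G.lapMatrix R v j = 0 := by
    have hs : ∀ v, G.lapMatrix R v j = G.lapMatrix R j v := fun v =>
      (Matrix.IsSymm.apply (G.isSymm_lapMatrix (R := R)) j v)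
    simp only [hs]
    have := congrFun (G.lapMatrix_mulVec_const_eq_zero (R := R)) j
    simpa [Matrix.mulVec, dotProduct] using this
  rw [h, zero_mul]

lemma stmt11_lap_ker (G : SimpleGraph V) [DecidableRel G.Adj] (hconn : G.Connected)
    (x : V → ℚ) (hx : G.lapMatrix ℚ *ᵥ x = 0) (i j : V) : x i = x j := by
  have h0 : Matrix.toLinearMap₂' ℚ (G.lapMatrix ℚ) x x = 0 := by
    rw [Matrix.toLinearMap₂'_apply', hx, dotProduct_zero]
  have hadj := (G.lapMatrix_toLinearMap₂'_apply'_eq_zero_iff_forall_adj ℚ x).mp h0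
  obtain ⟨w⟩ := hconn.preconnected i j
  induction w with
  | nil => rfl
  | cons hA _ h' => exact (hadj _ _ hA).trans h'

lemma stmt11_lap_map {R S : Type*} [CommRing R] [CommRing S] (f : R →+* S)
    (G : SimpleGraph V) [DecidableRel G.Adj] :
    (G.lapMatrix R).map f = G.lapMatrix S := by
  ext v w
  simp [lapMatrix, degMatrix, adjMatrix, Matrix.diagonal, Matrix.map_apply, Matrix.sub_apply,
    apply_ite f, map_natCast]

end auxlemmas

/-- the matrix of the linear map `(f,t) ↦ L(f,0) + t·e_q`, in snoc coordinates. -/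
def stmt11B (R : Type*) [CommRing R] (n : ℕ) (G : SimpleGraph (Fin (n + 1)))
    [DecidableRel G.Adj] : Matrix (Fin (n + 1)) (Fin (n + 1)) R :=
  fun v => Fin.snoc (fun j => G.lapMatrix R v j.castSucc) (if v = Fin.last n then 1 else 0)

lemma stmt11_lap_snoc_mulVec {R : Type*} [CommRing R] {n : ℕ} (G : SimpleGraph (Fin (n + 1)))
    [DecidableRel G.Adj] (f : Fin n → R) (v : Fin (n + 1)) :
    (G.lapMatrix R *ᵥ Fin.snoc f 0) v = ∑ j, G.lapMatrix R v j.castSucc * f j := by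
  simp [Matrix.mulVec, dotProduct, Fin.sum_univ_castSucc]

lemma stmt11B_mulVec {R : Type*} [CommRing R] {n : ℕ} (G : SimpleGraph (Fin (n + 1)))
    [DecidableRel G.Adj] (x : Fin (n + 1) → R) (v : Fin (n + 1)) :
    (stmt11B R n G *ᵥ x) v =
      (G.lapMatrix R *ᵥ Fin.snoc (fun j => x j.castSucc) 0) v
        + x (Fin.last n) * (if v = Fin.last n then 1 else 0) := by
  rw [stmt11_lap_snoc_mulVec]
  simp only [stmt11B, Matrix.mulVec, dotProduct, Fin.sum_univ_castSucc,
    Fin.snoc_castSucc, Fin.snoc_last]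
  ring

lemma stmt11B_ker {n : ℕ} (G : SimpleGraph (Fin (n + 1))) [DecidableRel G.Adj]
    (hconn : G.Connected) (x : Fin (n + 1) → ℚ) (hx : stmt11B ℚ n G *ᵥ x = 0) : x = 0 := by
  have hlast : x (Fin.last n) = 0 := by
    have hsum : (0 : ℚ) = ∑ v, ((G.lapMatrix ℚ *ᵥ Fin.snoc (fun j => x j.castSucc) 0) v
        + x (Fin.last n) * (if v = Fin.last n then 1 else 0)) := by
      calc (0 : ℚ) = ∑ v, (stmt11B ℚ n G *ᵥ x) v := by rw [hx]; simp
        _ = _ := Finset.sum_congr rfl fun v _ => stmt11B_mulVec G x v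
    rw [Finset.sum_add_distrib, stmt11_lap_sum, ← Finset.mul_sum] at hsum
    simpa using hsum.symm
  have hker : G.lapMatrix ℚ *ᵥ Fin.snoc (fun j => x j.castSucc) 0 = 0 := by
    funext v
    have := congrFun hx v
    rw [stmt11B_mulVec, hlast, zero_mul, add_zero] at this
    simpa using this
  have hconst := stmt11_lap_ker G hconn _ hker
  have hzero : ∀ v, (Fin.snoc (fun j => x j.castSucc) (0 : ℚ) : Fin (n + 1) → ℚ) v = 0 := by
    intro v
    have h5 := hconst v (Fin.last n)
    simpa using h5
  funext i
  refine Fin.lastCases ?_ (fun j => ?_) i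
  · exact hlast
  · simpa using hzero j.castSucc

lemma stmt11B_isUnit {n : ℕ} (G : SimpleGraph (Fin (n + 1))) [DecidableRel G.Adj]
    (hconn : G.Connected) : IsUnit (stmt11B ℚ n G) := by
  rw [← Matrix.mulVec_injective_iff_isUnit]
  intro x y hxy
  have h : stmt11B ℚ n G *ᵥ (x - y) = 0 := by
    rw [Matrix.mulVec_sub, hxy, sub_self]
  have := stmt11B_ker G hconn _ h
  exact sub_eq_zero.mp this

lemma stmt11_red_isUnit {n : ℕ} (G : SimpleGraph (Fin (n + 1))) [DecidableRel G.Adj]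
    (hconn : G.Connected) :
    IsUnit ((G.lapMatrix ℚ).submatrix Fin.castSucc Fin.castSucc) := by
  rw [← Matrix.mulVec_injective_iff_isUnit]
  intro f g hfg
  have h : ((G.lapMatrix ℚ).submatrix Fin.castSucc Fin.castSucc) *ᵥ (f - g) = 0 := by
    rw [Matrix.mulVec_sub, hfg, sub_self]
  suffices hz : f - g = 0 from sub_eq_zero.mp hz
  set d := f - g with hd
  -- extend to a kernel vector of `stmt11B`
  set t : ℚ := -(G.lapMatrix ℚ *ᵥ Fin.snoc d 0) (Fin.last n) with ht
  have hB : stmt11B ℚ n G *ᵥ Fin.snoc d t = 0 := by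
    funext v
    rw [stmt11B_mulVec]
    have hcs : (fun j : Fin n => (Fin.snoc d t : Fin (n + 1) → ℚ) (Fin.castSucc j)) = d := by
      funext j; simp
    rw [hcs, Fin.snoc_last]
    refine Fin.lastCases ?_ (fun i => ?_) v
    · simp [ht]
    · have h1 : (G.lapMatrix ℚ *ᵥ Fin.snoc d 0) i.castSucc
            = (((G.lapMatrix ℚ).submatrix Fin.castSucc Fin.castSucc) *ᵥ d) i := by
        rw [stmt11_lap_snoc_mulVec]
        simp [Matrix.mulVec, dotProduct, Matrix.submatrix_apply]
      have h2 : (i.castSucc : Fin (n + 1)) ≠ Fin.last n := Fin.ne_last_of_lt i.castSucc_lt_last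
      rw [if_neg h2, mul_zero, add_zero, h1, h]
      simp
  have := stmt11B_ker G hconn _ hB
  funext j
  have := congrFun this j.castSucc
  simpa using this

lemma stmt11_lap_apex {n : ℕ} (G : SimpleGraph (Fin (n + 1))) [DecidableRel G.Adj]
    (hconn : G.Connected) (D : Fin (n + 1) → ℤ) (hD : (∑ v, D v) = 0) :
    G.lapMatrix ℚ *ᵥ
      (Fin.snoc ((((G.lapMatrix ℚ).submatrix Fin.castSucc Fin.castSucc)⁻¹).mulVec
        (fun i => -(D i.castSucc : ℚ))) 0 : Fin (n + 1) → ℚ) = fun v => -(D v : ℚ) := by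
  set Lr := (G.lapMatrix ℚ).submatrix Fin.castSucc Fin.castSucc with hLr
  set ap : Fin n → ℚ := Lr⁻¹ *ᵥ (fun i => -(D i.castSucc : ℚ)) with hap
  have hdet : IsUnit Lr.det := (Matrix.isUnit_iff_isUnit_det Lr).mp (stmt11_red_isUnit G hconn)
  have hred : Lr *ᵥ ap = fun i => -(D i.castSucc : ℚ) := by
    rw [hap, Matrix.mulVec_mulVec, Matrix.mul_nonsing_inv Lr hdet, Matrix.one_mulVec]
  have hcast : ∀ i : Fin n,
      (G.lapMatrix ℚ *ᵥ (Fin.snoc ap 0 : Fin (n + 1) → ℚ)) i.castSucc = -(D i.castSucc : ℚ) := by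
    intro i
    rw [stmt11_lap_snoc_mulVec]
    have : (Lr *ᵥ ap) i = -(D i.castSucc : ℚ) := by rw [hred]
    rw [← this]
    simp [Matrix.mulVec, dotProduct, Matrix.submatrix_apply, hLr]
  have hlast : (G.lapMatrix ℚ *ᵥ (Fin.snoc ap 0 : Fin (n + 1) → ℚ)) (Fin.last n)
      = -(D (Fin.last n) : ℚ) := by
    have h0 := stmt11_lap_sum G (Fin.snoc ap 0 : Fin (n + 1) → ℚ)
    rw [Fin.sum_univ_castSucc] at h0
    simp only [hcast] at h0
    have hsD : (∑ i : Fin n, (D i.castSucc : ℚ)) + (D (Fin.last n) : ℚ) = 0 := by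
      have h1 : ((∑ v, D v : ℤ) : ℚ) = 0 := by rw [hD]; norm_num
      rw [Fin.sum_univ_castSucc] at h1
      push_cast at h1
      exact h1
    rw [Finset.sum_neg_distrib] at h0
    linarith
  funext v
  exact Fin.lastCases hlast hcast v

lemma stmt11B_apex {n : ℕ} (G : SimpleGraph (Fin (n + 1))) [DecidableRel G.Adj]
    (hconn : G.Connected) (D : Fin (n + 1) → ℤ) (hD : (∑ v, D v) = 0) :
    stmt11B ℚ n G *ᵥ
      (Fin.snoc ((((G.lapMatrix ℚ).submatrix Fin.castSucc Fin.castSucc)⁻¹).mulVec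
        (fun i => -(D i.castSucc : ℚ))) 0 : Fin (n + 1) → ℚ) = fun v => -(D v : ℚ) := by
  set ap : Fin n → ℚ :=
    (((G.lapMatrix ℚ).submatrix Fin.castSucc Fin.castSucc)⁻¹).mulVec
      (fun i => -(D i.castSucc : ℚ)) with hap
  funext v
  rw [stmt11B_mulVec]
  have h1 : (fun j : Fin n => (Fin.snoc ap 0 : Fin (n + 1) → ℚ) j.castSucc) = ap := by
    funext j; simp
  have h2 : (Fin.snoc ap 0 : Fin (n + 1) → ℚ) (Fin.last n) = 0 := by simp
  rw [h1, h2, zero_mul, add_zero]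
  exact congrFun (stmt11_lap_apex G hconn D hD) v

lemma stmt11B_map {n : ℕ} (G : SimpleGraph (Fin (n + 1))) [DecidableRel G.Adj] :
    (stmt11B ℚ n G).map (Rat.castHom ℝ) = stmt11B ℝ n G := by
  ext v i
  refine Fin.lastCases ?_ (fun j => ?_) i
  · simp [stmt11B, Matrix.map_apply, apply_ite]
  · simp only [stmt11B, Matrix.map_apply, Fin.snoc_castSucc]
    exact congrFun (congrFun (stmt11_lap_map (Rat.castHom ℝ) G) v) j.castSucc

lemma stmt11B_isUnitR {n : ℕ} (G : SimpleGraph (Fin (n + 1))) [DecidableRel G.Adj]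
    (hconn : G.Connected) : IsUnit (stmt11B ℝ n G) := by
  rw [Matrix.isUnit_iff_isUnit_det]
  have hdet : (stmt11B ℝ n G).det = ((stmt11B ℚ n G).det : ℝ) := by
    rw [← stmt11B_map, ← RingHom.mapMatrix_apply, ← RingHom.map_det]
    rfl
  have hq : (stmt11B ℚ n G).det ≠ 0 := by
    have := (Matrix.isUnit_iff_isUnit_det _).mp (stmt11B_isUnit G hconn)
    exact this.ne_zero
  rw [hdet, isUnit_iff_ne_zero]
  exact_mod_cast hq

lemma stmt11B_castMul {n : ℕ} (G : SimpleGraph (Fin (n + 1))) [DecidableRel G.Adj]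
    (y : Fin (n + 1) → ℚ) :
    stmt11B ℝ n G *ᵥ (fun v => ((y v : ℚ) : ℝ)) = fun v => (((stmt11B ℚ n G *ᵥ y) v : ℚ) : ℝ) := by
  funext v
  have h := RingHom.map_mulVec (Rat.castHom ℝ) (stmt11B ℚ n G) y v
  rw [stmt11B_map] at h
  exact h.symm

lemma stmt11_sum_single {m : ℕ} (c : Fin m → ℝ) :
    ∑ i, c i • (Pi.single i 1 : Fin m → ℝ) = c := by
  funext j
  simp [Finset.sum_apply, Pi.single_apply, mul_ite]
/-- For a degree-zero divisor `D` on a connected graph with `n+1`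
vertices (`q` last), the `q`-cone `K_D = {(f,t) : L(f,0) + t·q ≥ -D}` is a rational
simplicial cone with apex `(L̃⁻¹(-D|_{q=0}), 0)`, and `(f,k) ↦ D + kq + L(f,0)` is a
bijection from its lattice points to `{E effective : E - deg(E)q ∼ D}`. -/
theorem stmt11 (n : ℕ) (G : SimpleGraph (Fin (n + 1))) [DecidableRel G.Adj]
    (hconn : G.Connected) (D : Fin (n + 1) → ℤ) (hD : (∑ v, D v) = 0) :
    let q : Fin (n + 1) := Fin.last n
    let KD : Set ((Fin n → ℝ) × ℝ) :=
      {ft | ∀ v, -(D v : ℝ) ≤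
        (G.lapMatrix ℝ).mulVec (Fin.snoc ft.1 0) v + ft.2 * (if v = q then 1 else 0)}
    let apexQ : Fin n → ℚ :=
      (((G.lapMatrix ℚ).submatrix Fin.castSucc Fin.castSucc)⁻¹).mulVec
        (fun i => -(D i.castSucc : ℚ))
    -- (1) `K_D` is a rational simplicial `(n+1)`-cone with apex `(L̃⁻¹(-D|_{q=0}), 0)`
    (∃ ω : Fin (n + 1) → ((Fin n → ℝ) × ℝ),
      (∀ i, ∃ w : (Fin n → ℚ) × ℚ,
        ω i = (fun j => ((w.1 j : ℚ) : ℝ), ((w.2 : ℚ) : ℝ))) ∧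
      LinearIndependent ℝ ω ∧
      KD = {x | ∃ lam : Fin (n + 1) → ℝ, (∀ i, 0 ≤ lam i) ∧
        x = ((fun i => ((apexQ i : ℚ) : ℝ)), (0 : ℝ)) + ∑ i, lam i • ω i}) ∧
    -- (2) the lattice points of `K_D` are in bijection with `𝔼_{[D]}`
    Set.BijOn
      (fun fk : (Fin n → ℤ) × ℤ => fun v =>
        D v + (if v = q then fk.2 else 0)
          + (G.lapMatrix ℤ).mulVec (Fin.snoc fk.1 0) v)
      {fk : (Fin n → ℤ) × ℤ |
        ((fun i => ((fk.1 i : ℤ) : ℝ)), ((fk.2 : ℤ) : ℝ)) ∈ KD}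
      {E : Fin (n + 1) → ℤ | (∀ v, 0 ≤ E v) ∧
        ∃ g : Fin (n + 1) → ℤ,
          E - Pi.single q (∑ v, E v) - D = (G.lapMatrix ℤ).mulVec g} := by
  intro q KD apexQ
  -- basic invertibility facts
  have hBqdet : IsUnit (stmt11B ℚ n G).det :=
    (Matrix.isUnit_iff_isUnit_det _).mp (stmt11B_isUnit G hconn)
  have hBRinj : Function.Injective (stmt11B ℝ n G).mulVec :=
    Matrix.mulVec_injective_iff_isUnit.mpr (stmt11B_isUnitR G hconn)
  -- the rational generators
  set wq : Fin (n + 1) → Fin (n + 1) → ℚ :=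
    fun i => (stmt11B ℚ n G)⁻¹ *ᵥ Pi.single i 1 with hwq
  have hBwq : ∀ i, stmt11B ℚ n G *ᵥ wq i = Pi.single i 1 := by
    intro i
    rw [hwq, Matrix.mulVec_mulVec, Matrix.mul_nonsing_inv _ hBqdet, Matrix.one_mulVec]
  set wR : Fin (n + 1) → Fin (n + 1) → ℝ := fun i v => ((wq i v : ℚ) : ℝ) with hwR
  have hBwR : ∀ i, stmt11B ℝ n G *ᵥ wR i = Pi.single i 1 := by
    intro i
    have h := stmt11B_castMul G (wq i)
    rw [hBwq] at h
    rw [hwR]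
    rw [h]
    funext v
    simp [Pi.single_apply, apply_ite]
  -- the apex
  set aQ : Fin (n + 1) → ℚ :=
    Fin.snoc ((((G.lapMatrix ℚ).submatrix Fin.castSucc Fin.castSucc)⁻¹).mulVec
      (fun i => -(D i.castSucc : ℚ))) 0 with haQ
  set aR : Fin (n + 1) → ℝ := fun v => ((aQ v : ℚ) : ℝ) with haR
  have haQc : ∀ j : Fin n, aQ j.castSucc = apexQ j := fun j => by
    rw [haQ]; exact Fin.snoc_castSucc _ _ j
  have haQl : aQ (Fin.last n) = 0 := by rw [haQ]; exact Fin.snoc_last _ _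
  have hBaR : stmt11B ℝ n G *ᵥ aR = fun v => -(D v : ℝ) := by
    rw [haR, stmt11B_castMul G aQ, stmt11B_apex G hconn D hD]
    funext v; push_cast; ring
  -- the generators as pairs
  set ω : Fin (n + 1) → ((Fin n → ℝ) × ℝ) :=
    fun i => (fun j => wR i j.castSucc, wR i (Fin.last n)) with hω
  -- snoc bridges
  have hsnoc_sum : ∀ lam : Fin (n + 1) → ℝ,
      (Fin.snoc ((∑ i, lam i • ω i).1) ((∑ i, lam i • ω i).2) : Fin (n + 1) → ℝ)
        = ∑ i, lam i • wR i := by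
    intro lam
    funext v
    refine Fin.lastCases ?_ (fun j => ?_) v
    · simp [hω, Prod.snd_sum, Finset.sum_apply]
    · simp [hω, Prod.fst_sum, Finset.sum_apply]
  have hpair_inj : ∀ p r : (Fin n → ℝ) × ℝ,
      (Fin.snoc p.1 p.2 : Fin (n + 1) → ℝ) = Fin.snoc r.1 r.2 → p = r := by
    intro p r h
    have h1 : p.1 = r.1 := by
      funext j
      have := congrFun h j.castSucc
      simpa using this
    have h2 : p.2 = r.2 := by
      have := congrFun h (Fin.last n)
      simpa using this
    exact Prod.ext h1 h2
  have hsnoc_apex : ∀ lam : Fin (n + 1) → ℝ,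
      (Fin.snoc ((((fun i => ((apexQ i : ℚ) : ℝ)), (0 : ℝ)) + ∑ i, lam i • ω i).1)
        ((((fun i => ((apexQ i : ℚ) : ℝ)), (0 : ℝ)) + ∑ i, lam i • ω i).2) : Fin (n + 1) → ℝ)
        = aR + ∑ i, lam i • wR i := by
    intro lam
    funext v
    refine Fin.lastCases ?_ (fun j => ?_) v
    · have hs := congrFun (hsnoc_sum lam) (Fin.last n)
      rw [Fin.snoc_last] at hs ⊢
      simp only [Prod.snd_add, Pi.add_apply]
      rw [hs, haR]
      simp only [haQl]
      push_cast; ring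
    · have hs := congrFun (hsnoc_sum lam) j.castSucc
      rw [Fin.snoc_castSucc] at hs ⊢
      simp only [Prod.fst_add, Pi.add_apply]
      rw [hs, haR]
      simp only [haQc]
  -- the linear computation
  have hmulsum : ∀ lam : Fin (n + 1) → ℝ,
      stmt11B ℝ n G *ᵥ (∑ i, lam i • wR i) = lam := by
    intro lam
    have : stmt11B ℝ n G *ᵥ (∑ i, lam i • wR i)
        = ∑ i, lam i • (stmt11B ℝ n G *ᵥ wR i) := by
      simp only [← Matrix.mulVecLin_apply, map_sum, _root_.map_smul]
    rw [this]
    simp_rw [hBwR]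
    exact stmt11_sum_single lam
  have hcomp : ∀ lam : Fin (n + 1) → ℝ,
      stmt11B ℝ n G *ᵥ (aR + ∑ i, lam i • wR i) = fun v => -(D v : ℝ) + lam v := by
    intro lam
    rw [Matrix.mulVec_add, hBaR, hmulsum]
    rfl
  -- membership in KD via the matrix B
  have hkey : ∀ x : (Fin n → ℝ) × ℝ, x ∈ KD ↔
      ∀ v, -(D v : ℝ) ≤ (stmt11B ℝ n G *ᵥ (Fin.snoc x.1 x.2 : Fin (n + 1) → ℝ)) v := by
    intro x
    simp only [KD, q, Set.mem_setOf_eq]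
    refine forall_congr' fun v => ?_
    rw [stmt11B_mulVec]
    have h1 : (fun j : Fin n => (Fin.snoc x.1 x.2 : Fin (n + 1) → ℝ) j.castSucc) = x.1 := by
      funext j; simp
    have h2 : (Fin.snoc x.1 x.2 : Fin (n + 1) → ℝ) (Fin.last n) = x.2 := by simp
    rw [h1, h2]
  constructor
  · -- part (1)
    refine ⟨ω, fun i => ⟨(fun j => wq i j.castSucc, wq i (Fin.last n)), rfl⟩, ?_, ?_⟩
    · -- linear independence
      rw [Fintype.linearIndependent_iff]
      intro g hg
      have h0 : (Fin.snoc ((∑ i, g i • ω i).1) ((∑ i, g i • ω i).2) : Fin (n + 1) → ℝ)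
          = ∑ i, g i • wR i := hsnoc_sum g
      rw [hg] at h0
      have hz : (∑ i, g i • wR i) = 0 := by
        rw [← h0]
        funext v
        refine Fin.lastCases ?_ (fun j => ?_) v <;> simp
      have := hmulsum g
      rw [hz, Matrix.mulVec_zero] at this
      intro i
      exact (congrFun this.symm i)
    · -- the cone description
      ext x
      rw [hkey x]
      simp only [Set.mem_setOf_eq]
      constructor
      · intro hx
        set lam : Fin (n + 1) → ℝ :=
          fun i => (stmt11B ℝ n G *ᵥ (Fin.snoc x.1 x.2 : Fin (n + 1) → ℝ)) i + D i with hlam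
        refine ⟨lam, fun i => by have := hx i; rw [hlam]; dsimp only; linarith, ?_⟩
        have hvec : (Fin.snoc x.1 x.2 : Fin (n + 1) → ℝ) = aR + ∑ i, lam i • wR i := by
          apply hBRinj
          rw [hcomp lam]
          funext v
          rw [hlam]
          dsimp only
          ring
        apply hpair_inj
        rw [hsnoc_apex lam, ← hvec]
      · rintro ⟨lam, hlam, rfl⟩
        intro v
        rw [hsnoc_apex lam, hcomp lam]
        have := hlam v
        dsimp only
        linarith
  · -- part (2)
    have hZR : ∀ (y : Fin (n + 1) → ℤ) (v : Fin (n + 1)),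
        ((G.lapMatrix ℤ *ᵥ y) v : ℝ) = (G.lapMatrix ℝ *ᵥ fun u => ((y u : ℤ) : ℝ)) v := by
      intro y v
      have h := RingHom.map_mulVec (Int.castRingHom ℝ) (G.lapMatrix ℤ) y v
      rw [stmt11_lap_map] at h
      exact h
    have hZQ : ∀ (y : Fin (n + 1) → ℤ) (v : Fin (n + 1)),
        ((G.lapMatrix ℤ *ᵥ y) v : ℚ) = (G.lapMatrix ℚ *ᵥ fun u => ((y u : ℤ) : ℚ)) v := by
      intro y v
      have h := RingHom.map_mulVec (Int.castRingHom ℚ) (G.lapMatrix ℤ) y v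
      rw [stmt11_lap_map] at h
      exact h
    have hsnocZ : ∀ f : Fin n → ℤ,
        (fun u => (((Fin.snoc f 0 : Fin (n + 1) → ℤ) u : ℤ) : ℝ))
          = (Fin.snoc (fun i => ((f i : ℤ) : ℝ)) 0 : Fin (n + 1) → ℝ) := by
      intro f
      funext u
      refine Fin.lastCases ?_ (fun j => ?_) u <;> simp
    have hdom : ∀ fk : (Fin n → ℤ) × ℤ,
        (((fun i => ((fk.1 i : ℤ) : ℝ)), ((fk.2 : ℤ) : ℝ)) ∈ KD) ↔
          ∀ v, 0 ≤ D v + (if v = q then fk.2 else 0)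
            + (G.lapMatrix ℤ *ᵥ (Fin.snoc fk.1 0 : Fin (n + 1) → ℤ)) v := by
      intro fk
      simp only [KD, q, Set.mem_setOf_eq]
      refine forall_congr' fun v => ?_
      have hcast : (((D v + (if v = Fin.last n then fk.2 else 0)
          + (G.lapMatrix ℤ *ᵥ (Fin.snoc fk.1 0 : Fin (n + 1) → ℤ)) v : ℤ)) : ℝ)
          = (D v : ℝ) + ((G.lapMatrix ℝ).mulVec (Fin.snoc (fun i => ((fk.1 i : ℤ) : ℝ)) 0) v
            + (fk.2 : ℝ) * (if v = Fin.last n then 1 else 0)) := by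
        rw [← hsnocZ fk.1, ← hZR]
        push_cast
        split_ifs <;> ring
      constructor
      · intro h
        have h2 : (0 : ℝ) ≤ ((D v + (if v = Fin.last n then fk.2 else 0)
            + (G.lapMatrix ℤ *ᵥ (Fin.snoc fk.1 0 : Fin (n + 1) → ℤ)) v : ℤ) : ℝ) := by
          rw [hcast]; linarith
        exact_mod_cast h2
      · intro h
        have h2 : (0 : ℝ) ≤ ((D v + (if v = Fin.last n then fk.2 else 0)
            + (G.lapMatrix ℤ *ᵥ (Fin.snoc fk.1 0 : Fin (n + 1) → ℤ)) v : ℤ) : ℝ) := by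
          exact_mod_cast h
        rw [hcast] at h2
        linarith
    have hdeg : ∀ fk : (Fin n → ℤ) × ℤ,
        ∑ v, (D v + (if v = q then fk.2 else 0)
          + (G.lapMatrix ℤ *ᵥ (Fin.snoc fk.1 0 : Fin (n + 1) → ℤ)) v) = fk.2 := by
      intro fk
      rw [Finset.sum_add_distrib, Finset.sum_add_distrib, hD, stmt11_lap_sum]
      simp [q]
    refine ⟨?_, ?_, ?_⟩
    · -- MapsTo
      intro fk hfk
      have hfk' := (hdom fk).mp hfk
      simp only [Set.mem_setOf_eq]
      constructor
      · exact hfk'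
      · refine ⟨Fin.snoc fk.1 0, ?_⟩
        funext v
        simp only [Pi.sub_apply, Pi.single_apply]
        rw [hdeg fk]
        split_ifs <;> ring
    · -- InjOn
      intro fk _ fk' _ heq
      have h2 : fk.2 = fk'.2 := by
        have hs := congrArg (fun F : Fin (n + 1) → ℤ => ∑ v, F v) heq
        dsimp only at hs
        rw [hdeg fk, hdeg fk'] at hs
        exact hs
      have hLeq : ∀ v, (G.lapMatrix ℤ *ᵥ (Fin.snoc fk.1 0 : Fin (n + 1) → ℤ)) v
          = (G.lapMatrix ℤ *ᵥ (Fin.snoc fk'.1 0 : Fin (n + 1) → ℤ)) v := by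
        intro v
        have := congrFun heq v
        dsimp only at this
        rw [h2] at this
        exact add_left_cancel this
      have hd0 : G.lapMatrix ℚ *ᵥ
          ((fun u => (((Fin.snoc fk.1 0 : Fin (n + 1) → ℤ) u : ℤ) : ℚ))
            - fun u => (((Fin.snoc fk'.1 0 : Fin (n + 1) → ℤ) u : ℤ) : ℚ)) = 0 := by
        rw [Matrix.mulVec_sub]
        funext v
        simp only [Pi.sub_apply, Pi.zero_apply]
        rw [← hZQ, ← hZQ, hLeq v, sub_self]
      have hconst := stmt11_lap_ker G hconn _ hd0
      have h1 : fk.1 = fk'.1 := by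
        funext j
        have := hconst j.castSucc (Fin.last n)
        simp only [Pi.sub_apply] at this
        have h7 : ((fk.1 j : ℤ) : ℚ) - ((fk'.1 j : ℤ) : ℚ) = 0 := by
          simpa using this
        exact_mod_cast sub_eq_zero.mp h7
      exact Prod.ext h1 h2
    · -- SurjOn
      intro E hE
      obtain ⟨hEpos, g, hg⟩ := hE
      set k : ℤ := ∑ v, E v with hk
      set f : Fin n → ℤ := fun i => g i.castSucc - g (Fin.last n) with hf
      have hsf : (Fin.snoc f 0 : Fin (n + 1) → ℤ) = fun v => g v - g (Fin.last n) := by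
        funext v
        refine Fin.lastCases ?_ (fun j => ?_) v <;> simp [hf]
      have hLf : G.lapMatrix ℤ *ᵥ (Fin.snoc f 0 : Fin (n + 1) → ℤ) = G.lapMatrix ℤ *ᵥ g := by
        rw [hsf]
        have he : (fun v => g v - g (Fin.last n)) = g - fun _ => g (Fin.last n) := rfl
        rw [he, Matrix.mulVec_sub]
        have hc : G.lapMatrix ℤ *ᵥ (fun _ : Fin (n + 1) => g (Fin.last n)) = 0 := by
          have he2 : (fun _ : Fin (n + 1) => g (Fin.last n))
              = g (Fin.last n) • fun _ : Fin (n + 1) => (1 : ℤ) := by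
            funext u; simp
          rw [he2, Matrix.mulVec_smul, G.lapMatrix_mulVec_const_eq_zero, smul_zero]
        rw [hc, sub_zero]
      have himg : (fun v => D v + (if v = q then k else 0)
          + (G.lapMatrix ℤ *ᵥ (Fin.snoc f 0 : Fin (n + 1) → ℤ)) v) = E := by
        funext v
        have hgv := congrFun hg v
        simp only [Pi.sub_apply, Pi.single_apply] at hgv
        rw [hLf]
        linarith [hgv]
      refine ⟨(f, k), ?_, himg⟩
      apply (hdom (f, k)).mpr
      intro v
      have := hEpos v
      rw [← congrFun himg v] at this
      exact this
end

section
/- Let n, k be positive integers with gcd(n,k) = 1, and identify effective divisors of degree k on the cycle graph C_n with words bw^{a_1}...bw^{a_n} (a_i ≥ 0, Σ a_i = k). Then for each j, the map sending an effective divisor E ∈ |D_j + kq| to the cyclic equivalence class of its associated word is a bijection from |D_j + kq| to the set of binary necklaces with n black beads and k white beads, where D_j = v_j − q. -/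
def cycLap (n : ℕ) : Matrix (ZMod n) (ZMod n) ℤ :=
  Matrix.of fun i j =>
    (if i = j then 2 else 0) - (if j = i + 1 then 1 else 0) - (if j = i - 1 then 1 else 0)

open Finset

variable {n : ℕ}

section Helpers
variable [NeZero n]

lemma zmod_sum_range {M : Type*} [AddCommMonoid M] (f : ZMod n → M) :
    ∑ i ∈ Finset.range n, f (i : ZMod n) = ∑ v : ZMod n, f v := by
  rw [← Fin.sum_univ_eq_sum_range (fun i => f (i : ZMod n)) n]
  apply Fintype.sum_bijective (fun i : Fin n => ((i : ℕ) : ZMod n))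
  · constructor
    · intro a b hab
      have h := congrArg ZMod.val hab
      rwa [ZMod.val_natCast, ZMod.val_natCast, Nat.mod_eq_of_lt a.isLt,
        Nat.mod_eq_of_lt b.isLt, ← Fin.ext_iff] at h
    · intro v
      exact ⟨⟨v.val, v.val_lt⟩, ZMod.natCast_rightInverse v⟩
  · intro i; rfl

lemma zmod_sum_shift {M : Type*} [AddCommMonoid M] (f : ZMod n → M) (c : ZMod n) :
    ∑ v : ZMod n, f (v + c) = ∑ v : ZMod n, f v :=
  Fintype.sum_bijective (fun v => v + c) (Equiv.addRight c).bijective _ _ (fun _ => rfl)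

lemma cycLap_apply (f : ZMod n → ℤ) (v : ZMod n) :
    (cycLap n).mulVec f v = 2 * f v - f (v + 1) - f (v - 1) := by
  classical
  simp only [cycLap, Matrix.mulVec, dotProduct, Matrix.of_apply, sub_mul,
    Finset.sum_sub_distrib, ite_mul, zero_mul, one_mul]
  rw [Finset.sum_ite_eq univ v (fun x => 2 * f x), Finset.sum_ite_eq' univ (v+1) f,
    Finset.sum_ite_eq' univ (v-1) f]
  simp

end Helpers

section Alg
variable [NeZero n]

/-- class invariant -/
def sigZ (E : ZMod n → ℤ) : ZMod n := ∑ v : ZMod n, v * ((E v : ℤ) : ZMod n)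

lemma deg_lap (f : ZMod n → ℤ) : ∑ v : ZMod n, (cycLap n).mulVec f v = 0 := by
  have h1 : ∑ v : ZMod n, f (v + 1) = ∑ v : ZMod n, f v := zmod_sum_shift f 1
  have h2 : ∑ v : ZMod n, f (v - 1) = ∑ v : ZMod n, f v := by
    simpa [sub_eq_add_neg] using zmod_sum_shift f (-1)
  simp only [cycLap_apply, Finset.sum_sub_distrib, h1, h2, ← Finset.mul_sum]
  ring

lemma sigZ_lap (f : ZMod n → ℤ) : sigZ ((cycLap n).mulVec f) = 0 := by
  have h1 : ∑ v : ZMod n, v * ((f (v + 1) : ℤ) : ZMod n)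
      = ∑ v : ZMod n, (v - 1) * ((f v : ℤ) : ZMod n) := by
    have := zmod_sum_shift (fun v => (v - 1) * ((f v : ℤ) : ZMod n)) 1
    simpa using this
  have h2 : ∑ v : ZMod n, v * ((f (v - 1) : ℤ) : ZMod n)
      = ∑ v : ZMod n, (v + 1) * ((f v : ℤ) : ZMod n) := by
    have := zmod_sum_shift (fun v => (v + 1) * ((f v : ℤ) : ZMod n)) (-1)
    simpa [sub_eq_add_neg] using this
  simp only [sigZ, cycLap_apply]
  push_cast
  simp only [mul_sub, Finset.sum_sub_distrib, h1, h2]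
  rw [← Finset.sum_sub_distrib, ← Finset.sum_sub_distrib]
  apply Finset.sum_eq_zero
  intro v _
  ring

lemma val_sub_one {v : ZMod n} (hv : v ≠ 0) : (v - 1).val = v.val - 1 := by
  have h1 : 1 ≤ v.val := Nat.one_le_iff_ne_zero.mpr (fun h => hv ((ZMod.val_eq_zero v).mp h))
  have : ((v.val - 1 : ℕ) : ZMod n) = v - 1 := by
    push_cast [h1]
    rw [ZMod.natCast_val, ZMod.cast_id]
  rw [← this, ZMod.val_natCast, Nat.mod_eq_of_lt (lt_of_le_of_lt (Nat.sub_le _ _) v.val_lt)]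

lemma tele1 (g : ZMod n → ℤ) (hg : ∑ v : ZMod n, g v = 0) :
    ∃ h : ZMod n → ℤ, ∀ v, g v = h v - h (v - 1) := by
  refine ⟨fun v => ∑ i ∈ Finset.range (v.val + 1), g i, fun v => ?_⟩
  dsimp only
  by_cases hv : v = 0
  · subst hv
    have hval : ((0:ZMod n) - 1).val = n - 1 := by
      obtain ⟨m, rfl⟩ := Nat.exists_eq_succ_of_ne_zero (NeZero.ne n)
      simpa using ZMod.val_neg_one m
    rw [hval]
    have hn1 : n - 1 + 1 = n := Nat.succ_pred_eq_of_pos (Nat.pos_of_ne_zero (NeZero.ne n))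
    rw [hn1, zmod_sum_range g, hg]
    simp
  · rw [val_sub_one hv]
    have h1 : 1 ≤ v.val := Nat.one_le_iff_ne_zero.mpr (fun h => hv ((ZMod.val_eq_zero v).mp h))
    have : v.val - 1 + 1 = v.val := Nat.succ_pred_eq_of_pos h1
    rw [this, Finset.sum_range_succ, ZMod.natCast_val, ZMod.cast_id]
    ring

lemma tele2 (u : ZMod n → ℤ) (hu : ∑ v : ZMod n, u v = 0) :
    ∃ f : ZMod n → ℤ, ∀ v, u v = f v - f (v + 1) := by
  refine ⟨fun v => -∑ i ∈ Finset.range v.val, u i, fun v => ?_⟩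
  dsimp only
  by_cases hv : v.val + 1 < n
  · have hval : (v + 1).val = v.val + 1 := by
      have h1 : (1 : ZMod n).val = 1 := ZMod.val_one'' (by omega)
      rw [ZMod.val_add_of_lt (by omega), h1]
    rw [hval, Finset.sum_range_succ, ZMod.natCast_val, ZMod.cast_id]
    ring
  · have hvn : v.val + 1 = n := by have := v.val_lt; omega
    have hv1 : v + 1 = 0 := by
      have : ((v.val + 1 : ℕ) : ZMod n) = v + 1 := by
        push_cast; rw [ZMod.natCast_val, ZMod.cast_id]
      rw [← this, hvn, ZMod.natCast_self]
    rw [hv1]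
    have : ∑ i ∈ Finset.range n, u i = 0 := by rw [zmod_sum_range u, hu]
    rw [show Finset.range n = Finset.range (v.val + 1) from congrArg _ hvn.symm,
      Finset.sum_range_succ, ZMod.natCast_val, ZMod.cast_id] at this
    simp [ZMod.val_zero]
    linarith

end Alg

section Alg2
variable [NeZero n]

lemma sigZ_of_tele (g h : ZMod n → ℤ) (hh : ∀ v, g v = h v - h (v - 1)) :
    sigZ g = -((∑ v : ZMod n, h v : ℤ) : ZMod n) := by
  have key : ∑ v : ZMod n, v * ((h (v - 1) : ℤ) : ZMod n)
      = ∑ v : ZMod n, (v + 1) * ((h v : ℤ) : ZMod n) := by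
    have := zmod_sum_shift (fun v => (v + 1) * ((h v : ℤ) : ZMod n)) (-1)
    simpa [sub_eq_add_neg] using this
  simp only [sigZ, hh]
  push_cast
  simp only [mul_sub, Finset.sum_sub_distrib, key]
  rw [← Finset.sum_sub_distrib]
  have : ∀ v : ZMod n, v * ((h v : ℤ) : ZMod n) - (v + 1) * ((h v : ℤ) : ZMod n)
      = -((h v : ℤ) : ZMod n) := fun v => by ring
  rw [Finset.sum_congr rfl (fun v _ => this v), ← Finset.sum_neg_distrib]

lemma mem_image_lap_iff (g : ZMod n → ℤ) :
    (∃ f, g = (cycLap n).mulVec f) ↔ (∑ v : ZMod n, g v = 0 ∧ sigZ g = 0) := by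
  constructor
  · rintro ⟨f, rfl⟩
    exact ⟨deg_lap f, sigZ_lap f⟩
  · rintro ⟨hd, hs⟩
    obtain ⟨h, hh⟩ := tele1 g hd
    have hdvd : (n : ℤ) ∣ ∑ v : ZMod n, h v := by
      rw [← ZMod.intCast_zmod_eq_zero_iff_dvd]
      have := sigZ_of_tele g h hh
      rw [hs] at this
      push_cast at this ⊢
      linear_combination this
    obtain ⟨c, hc⟩ := hdvd
    have hu : ∑ v : ZMod n, (h v - c) = 0 := by
      rw [Finset.sum_sub_distrib, Finset.sum_const, Finset.card_univ, ZMod.card,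
        nsmul_eq_mul, hc]
      ring
    obtain ⟨f, hf⟩ := tele2 (fun v => h v - c) hu
    refine ⟨f, funext fun v => ?_⟩
    rw [cycLap_apply, hh v]
    have h1 := hf v
    have h2 := hf (v - 1)
    rw [sub_add_cancel] at h2
    linarith

end Alg2

section Char
variable [NeZero n]

lemma mem_S_iff (k : ℕ) (j : ZMod n) (E : ZMod n → ℤ) :
    ((∀ v, 0 ≤ E v) ∧
      ∃ f : ZMod n → ℤ,
        E - (fun v => (if v = j then 1 else 0) + (if v = 0 then (k : ℤ) - 1 else 0))
          = (cycLap n).mulVec f) ↔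
    ((∀ v, 0 ≤ E v) ∧ ∑ v : ZMod n, E v = k ∧ sigZ E = j) := by
  set D : ZMod n → ℤ := fun v => (if v = j then 1 else 0) + (if v = 0 then (k : ℤ) - 1 else 0)
    with hD
  have hdegD : ∑ v : ZMod n, D v = k := by
    simp only [hD, Finset.sum_add_distrib, Finset.sum_ite_eq', Finset.mem_univ, if_true]
    ring
  have hsigD : sigZ D = j := by
    simp only [sigZ, hD]
    push_cast
    simp only [mul_add, Finset.sum_add_distrib, mul_ite, mul_one, mul_zero]
    rw [Finset.sum_ite_eq' univ j (fun v => v), Finset.sum_ite_eq' univ 0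
      (fun v => v * ((k : ZMod n) - 1))]
    simp
  have hsub : ∀ (A B : ZMod n → ℤ), sigZ (A - B) = sigZ A - sigZ B := by
    intro A B
    simp only [sigZ, Pi.sub_apply]
    push_cast
    simp only [mul_sub, Finset.sum_sub_distrib]
  constructor
  · rintro ⟨h0, f, hf⟩
    have := (mem_image_lap_iff (E - D)).mp ⟨f, hf⟩
    obtain ⟨hd, hs⟩ := this
    rw [hsub E D, hsigD, sub_eq_zero] at hs
    have : ∑ v : ZMod n, (E v - D v) = 0 := by
      simpa [Pi.sub_apply] using hd
    rw [Finset.sum_sub_distrib, hdegD, sub_eq_zero] at this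
    exact ⟨h0, this, hs⟩
  · rintro ⟨h0, hd, hs⟩
    refine ⟨h0, (mem_image_lap_iff (E - D)).mpr ⟨?_, ?_⟩⟩
    · simp [Pi.sub_apply, Finset.sum_sub_distrib, hd, hdegD]
    · rw [hsub E D, hsigD, hs, sub_self]

end Char

def toWord (n k : ℕ) [NeZero n] (E : ZMod n → ℕ) : Fin (n + k) → Bool :=
  fun p => decide (∃ j < n, (p : Fin (n + k)).val
    = j + ∑ i ∈ Finset.range j, E ((i + 1 : ℕ) : ZMod n))

section Words
variable [NeZero n] {k : ℕ}

/-- position of the `j`-th black bead -/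
def posE (n : ℕ) [NeZero n] (E : ZMod n → ℕ) (j : ℕ) : ℕ :=
  j + ∑ i ∈ Finset.range j, E ((i + 1 : ℕ) : ZMod n)

lemma toWord_iff (E : ZMod n → ℕ) (p : Fin (n + k)) :
    toWord n k E p = true ↔ ∃ j < n, p.val = posE n E j := by
  simp [toWord, posE]

lemma posE_succ (E : ZMod n → ℕ) (j : ℕ) :
    posE n E (j + 1) = posE n E j + 1 + E ((j + 1 : ℕ) : ZMod n) := by
  simp only [posE, Finset.sum_range_succ]
  omega

lemma posE_strictMono (E : ZMod n → ℕ) : StrictMono (posE n E) := by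
  apply strictMono_nat_of_lt_succ
  intro j
  rw [posE_succ]
  omega

lemma sum_gaps (E : ZMod n → ℕ) :
    ∑ i ∈ Finset.range n, E ((i + 1 : ℕ) : ZMod n) = ∑ v : ZMod n, E v := by
  have h1 : ∀ i : ℕ, ((i + 1 : ℕ) : ZMod n) = (i : ZMod n) + 1 := by intro i; push_cast; ring
  calc ∑ i ∈ Finset.range n, E ((i + 1 : ℕ) : ZMod n)
      = ∑ i ∈ Finset.range n, E ((i : ZMod n) + 1) := by
        exact Finset.sum_congr rfl fun i _ => by rw [h1]
    _ = ∑ v : ZMod n, E (v + 1) := zmod_sum_range (fun v => E (v + 1))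
    _ = ∑ v : ZMod n, E v := zmod_sum_shift E 1

lemma posE_n (E : ZMod n → ℕ) (hE : ∑ v : ZMod n, E v = k) : posE n E n = n + k := by
  rw [posE, sum_gaps, hE]

lemma posE_lt (E : ZMod n → ℕ) (hE : ∑ v : ZMod n, E v = k) {j : ℕ} (hj : j < n) :
    posE n E j < n + k := by
  have := posE_strictMono E (show j < n from hj)
  rw [posE_n E hE] at this
  omega

lemma posE_le_of_le (E : ZMod n → ℕ) (hE : ∑ v : ZMod n, E v = k) {j : ℕ} (hj : j ≤ n) :
    posE n E j ≤ n + k := by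
  rcases eq_or_lt_of_le hj with rfl | h
  · exact (posE_n E hE).le
  · exact (posE_lt E hE h).le

lemma posE_shift_aux (E : ZMod n → ℕ) (t j : ℕ) :
    posE n E (t + j) = posE n E t + posE n (fun v => E (v + (t : ZMod n))) j := by
  simp only [posE]
  have hsplit : ∑ i ∈ Finset.range (t + j), E ((i + 1 : ℕ) : ZMod n)
      = ∑ i ∈ Finset.range t, E ((i + 1 : ℕ) : ZMod n)
        + ∑ i ∈ Finset.range j, E ((t + i + 1 : ℕ) : ZMod n) := by
    rw [← Finset.sum_range_add_sum_Ico _ (Nat.le_add_right t j),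
      Finset.sum_Ico_eq_sum_range]
    simp only [Nat.add_sub_cancel_left]
  rw [hsplit]
  have : ∀ i : ℕ, E (((i + 1 : ℕ) : ZMod n) + (t : ZMod n)) = E ((t + i + 1 : ℕ) : ZMod n) := by
    intro i
    congr 1
    push_cast
    ring
  rw [Finset.sum_congr rfl fun i _ => this i]
  omega

lemma posE_period (E : ZMod n → ℕ) (hE : ∑ v : ZMod n, E v = k) (j : ℕ) :
    posE n E (j + n) = posE n E j + (n + k) := by
  rw [show j + n = j + n from rfl]
  -- iterate: use posE_shift_aux with t := j
  rw [posE_shift_aux E j n]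
  have : posE n (fun v => E (v + (j : ZMod n))) n = n + k := by
    apply posE_n
    rw [show ∑ v : ZMod n, E (v + (j:ZMod n)) = ∑ v : ZMod n, E v from
      zmod_sum_shift E (j : ZMod n), hE]
  omega

lemma posE_reduce (E : ZMod n → ℕ) (hE : ∑ v : ZMod n, E v = k) (j : ℕ) :
    posE n E j = posE n E (j % n) + (j / n) * (n + k) := by
  conv_lhs => rw [← Nat.mod_add_div j n]
  generalize j / n = q
  induction q with
  | zero => simp
  | succ q ih =>
      rw [show j % n + n * (q + 1) = (j % n + n * q) + n by ring, posE_period E hE, ih]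
      ring

end Words

section Words2
variable [NeZero n] {k : ℕ}

lemma toWord_iff_mod (hn : 0 < n) (E : ZMod n → ℕ) (hE : ∑ v : ZMod n, E v = k)
    (p : Fin (n + k)) :
    toWord n k E p = true ↔ ∃ j : ℕ, (p.val : ZMod (n + k)) = (posE n E j : ZMod (n + k)) := by
  haveI : NeZero (n + k) := ⟨by omega⟩
  rw [toWord_iff]
  constructor
  · rintro ⟨j, hj, hpj⟩
    exact ⟨j, by rw [hpj]⟩
  · rintro ⟨j, hj⟩
    refine ⟨j % n, Nat.mod_lt _ hn, ?_⟩
    rw [posE_reduce E hE j, Nat.cast_add, Nat.cast_mul, ZMod.natCast_self, mul_zero,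
      add_zero] at hj
    have h1 : p.val < n + k := p.isLt
    have h2 : posE n E (j % n) < n + k := posE_lt E hE (Nat.mod_lt _ hn)
    have := congrArg ZMod.val hj
    rwa [ZMod.val_natCast, ZMod.val_natCast, Nat.mod_eq_of_lt h1, Nat.mod_eq_of_lt h2] at this

lemma card_blacks (hn : 0 < n) (E : ZMod n → ℕ) (hE : ∑ v : ZMod n, E v = k) :
    (Finset.univ.filter fun i => toWord n k E i = true).card = n := by
  have himg : (Finset.univ.filter fun i => toWord n k E i = true)
      = Finset.image (fun j : Fin n => (⟨posE n E j.val, posE_lt E hE j.isLt⟩ : Fin (n + k)))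
          Finset.univ := by
    ext p
    simp only [Finset.mem_filter, Finset.mem_univ, true_and, Finset.mem_image, toWord_iff]
    constructor
    · rintro ⟨j, hj, hpj⟩
      exact ⟨⟨j, hj⟩, Fin.ext hpj.symm⟩
    · rintro ⟨j, hj⟩
      exact ⟨j.val, j.isLt, by rw [← hj]⟩
  rw [himg, Finset.card_image_of_injective _ ?_, Finset.card_univ, Fintype.card_fin]
  intro a b hab
  have := congrArg Fin.val hab
  simp only at this
  exact Fin.ext ((posE_strictMono E).injective this)

lemma word_determines (hn : 0 < n) (E E' : ZMod n → ℕ)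
    (hE : ∑ v : ZMod n, E v = k) (hE' : ∑ v : ZMod n, E' v = k)
    (hw : toWord n k E = toWord n k E') : E = E' := by
  set s := (Finset.univ.filter fun i => toWord n k E i = true) with hs
  have hcard : s.card = n := card_blacks hn E hE
  have key : ∀ (F : ZMod n → ℕ) (hF : ∑ v : ZMod n, F v = k),
      toWord n k F = toWord n k E →
      ∀ j : Fin n, (⟨posE n F j.val, posE_lt F hF j.isLt⟩ : Fin (n + k))
        = s.orderEmbOfFin hcard j := by
    intro F hF hwF
    have := Finset.orderEmbOfFin_unique hcard
      (f := fun j : Fin n => (⟨posE n F j.val, posE_lt F hF j.isLt⟩ : Fin (n + k)))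
      (fun x => ?_) (fun a b hab => ?_)
    · intro j; rw [← this]
    · rw [hs, Finset.mem_filter, ← hwF]
      exact ⟨Finset.mem_univ _, (toWord_iff F _).mpr ⟨x.val, x.isLt, rfl⟩⟩
    · simpa [Fin.lt_iff_val_lt_val] using posE_strictMono F (show a.val < b.val from hab)
  have hpos : ∀ j : Fin n, posE n E j.val = posE n E' j.val := by
    intro j
    have h1 := key E hE rfl j
    have h2 := key E' hE' hw.symm j
    have := h1.trans h2.symm
    exact congrArg Fin.val this
  have hposle : ∀ j ≤ n, posE n E j = posE n E' j := by
    intro j hj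
    rcases eq_or_lt_of_le hj with rfl | h
    · rw [posE_n E hE, posE_n E' hE']
    · exact hpos ⟨j, h⟩
  funext v
  set i := (v - 1).val with hi
  have hiv : ((i + 1 : ℕ) : ZMod n) = v := by
    rw [hi]
    push_cast
    rw [ZMod.natCast_val, ZMod.cast_id]
    ring
  have hilt : i < n := (v - 1).val_lt
  have e1 := posE_succ E i
  have e2 := posE_succ E' i
  rw [hiv] at e1 e2
  have g1 := hposle i hilt.le
  have g2 := hposle (i + 1) hilt
  omega

lemma toWord_shift (hn : 0 < n) (E : ZMod n → ℕ) (hE : ∑ v : ZMod n, E v = k)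
    {t : ℕ} (ht : t < n) (i : Fin (n + k)) :
    toWord n k (fun v => E (v + (t : ZMod n))) i
      = toWord n k E (i + ⟨posE n E t, posE_lt E hE ht⟩) := by
  haveI : NeZero (n + k) := ⟨by omega⟩
  set F : ZMod n → ℕ := fun v => E (v + (t : ZMod n)) with hF
  have hFk : ∑ v : ZMod n, F v = k := by
    rw [hF]; rw [zmod_sum_shift E (t : ZMod n), hE]
  have hval : (((i + ⟨posE n E t, posE_lt E hE ht⟩ : Fin (n + k)).val : ℕ) : ZMod (n + k))
      = (i.val : ZMod (n + k)) + (posE n E t : ZMod (n + k)) := by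
    rw [Fin.val_add]
    simp only []
    rw [ZMod.natCast_mod, Nat.cast_add]
  rw [Bool.eq_iff_iff, toWord_iff_mod hn F hFk, toWord_iff_mod hn E hE]
  constructor
  · rintro ⟨j, hj⟩
    refine ⟨t + j, ?_⟩
    rw [hval, posE_shift_aux E t j, Nat.cast_add, ← hF, hj]
    ring
  · rintro ⟨j', hj'⟩
    refine ⟨(j' + n) - t, ?_⟩
    have harith : t + ((j' + n) - t) = j' + n := by omega
    have hper : posE n E (j' + n) = posE n E j' + (n + k) := posE_period E hE j'
    have : (posE n E (t + ((j' + n) - t)) : ZMod (n + k)) = posE n E j' := by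
      rw [harith, hper, Nat.cast_add, ZMod.natCast_self, add_zero]
    rw [posE_shift_aux E t ((j' + n) - t), Nat.cast_add, ← hF] at this
    rw [hval] at hj'
    rw [← hj', add_comm ((i.val : ZMod (n + k))) _] at this
    exact (add_left_cancel this).symm

lemma sigN_shift (E : ZMod n → ℕ) (hE : ∑ v : ZMod n, E v = k) (t : ℕ) :
    sigZ (fun v => ((E (v + (t : ZMod n)) : ℤ))) = sigZ (fun v => (E v : ℤ)) - (t : ZMod n) * (k : ZMod n) := by
  have key : ∑ v : ZMod n, v * ((E (v + (t : ZMod n)) : ℤ) : ZMod n)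
      = ∑ v : ZMod n, (v - (t : ZMod n)) * ((E v : ℤ) : ZMod n) := by
    have := zmod_sum_shift (fun v => (v - (t : ZMod n)) * ((E v : ℤ) : ZMod n)) (t : ZMod n)
    simpa using this
  simp only [sigZ, key, sub_mul, Finset.sum_sub_distrib]
  congr 1
  rw [← Finset.mul_sum]
  have hsum : ∑ v : ZMod n, ((E v : ℤ) : ZMod n) = (k : ZMod n) := by
    rw [← hE]
    push_cast
    rfl
  rw [hsum]

lemma exists_divisor (hn : 0 < n) (hk : 0 < k) (w0 : Fin (n + k) → Bool)
    (hcard : (Finset.univ.filter fun i => w0 i = true).card = n)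
    (h0 : w0 ⟨0, by omega⟩ = true) :
    ∃ E : ZMod n → ℕ, ∑ v : ZMod n, E v = k ∧ toWord n k E = w0 := by
  set s := (Finset.univ.filter fun i => w0 i = true) with hs
  set emb := s.orderEmbOfFin hcard with hemb
  have hmem : ∀ x : Fin n, w0 (emb x) = true := by
    intro x
    have h := Finset.orderEmbOfFin_mem s hcard x
    exact (Finset.mem_filter.mp h).2
  have hp0 : (⟨0, by omega⟩ : Fin (n + k)) ∈ s :=
    Finset.mem_filter.mpr ⟨Finset.mem_univ _, h0⟩
  have hzero : (emb ⟨0, hn⟩ : Fin (n + k)) = ⟨0, by omega⟩ := by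
    have h1 : emb ⟨0, hn⟩ = s.min' ⟨_, hp0⟩ := Finset.orderEmbOfFin_zero hcard hn
    have h2 : s.min' ⟨_, hp0⟩ ≤ ⟨0, by omega⟩ := Finset.min'_le s _ hp0
    rw [h1]
    exact le_antisymm h2 (Fin.mk_le_mk.mpr (Nat.zero_le _))
  -- B j = position of j-th black, extended by n + k
  set B : ℕ → ℕ := fun m => if h : m < n then (emb ⟨m, h⟩).val else n + k with hB
  have hB0 : B 0 = 0 := by
    simp only [hB, dif_pos hn]
    rw [hzero]
  have hBmono : ∀ {a b : ℕ}, a < b → b ≤ n → B a < B b := by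
    intro a b hab hbn
    have ha : a < n := by omega
    have h1 : B a = (emb ⟨a, ha⟩).val := by simp only [hB, dif_pos ha]
    rcases eq_or_lt_of_le hbn with heq | hbn'
    · have h2 : B b = n + k := by simp only [hB, heq]; simp
      rw [h1, h2]
      exact (emb ⟨a, ha⟩).isLt
    · have h2 : B b = (emb ⟨b, hbn'⟩).val := by simp only [hB, dif_pos hbn']
      rw [h1, h2]
      exact emb.strictMono (by simpa [Fin.lt_iff_val_lt_val] using hab)
  -- the divisor
  set E : ZMod n → ℕ := fun v =>
    B (if v = 0 then n else v.val) - B ((if v = 0 then n else v.val) - 1) - 1 with hE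
  have hgap : ∀ i : ℕ, i < n → E ((i + 1 : ℕ) : ZMod n) = B (i + 1) - B i - 1 := by
    intro i hi
    rw [hE]
    by_cases hin : i + 1 = n
    · have : ((i + 1 : ℕ) : ZMod n) = 0 := by rw [hin, ZMod.natCast_self]
      rw [this]
      simp only [eq_self_iff_true, if_true]
      rw [hin, show n - 1 = i from by omega]
    · have hlt : i + 1 < n := by omega
      have hvne : ((i + 1 : ℕ) : ZMod n) ≠ 0 := by
        intro hcon
        rw [ZMod.natCast_eq_zero_iff] at hcon
        have := Nat.le_of_dvd (by omega) hcon
        omega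
      have hval : ((i + 1 : ℕ) : ZMod n).val = i + 1 := ZMod.val_natCast_of_lt hlt
      simp only [if_neg hvne, hval]
      simp
  have hposB : ∀ j ≤ n, posE n E j = B j := by
    intro j hj
    induction j with
    | zero => simp [posE, hB0]
    | succ m ih =>
        show posE n E (m + 1) = B (m + 1)
        have hm : m < n := by omega
        rw [posE_succ, ih (by omega), hgap m hm]
        have := hBmono (show m < m + 1 from by omega) hj
        omega
  have hEk : ∑ v : ZMod n, E v = k := by
    have h1 : posE n E n = B n := hposB n le_rfl
    have h2 : B n = n + k := by rw [hB]; simp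
    rw [posE, sum_gaps] at h1
    omega
  refine ⟨E, hEk, funext fun p => ?_⟩
  rw [Bool.eq_iff_iff, toWord_iff]
  constructor
  · rintro ⟨j, hj, hpj⟩
    have : p.val = B j := by rw [← hposB j hj.le]; exact hpj
    have : p = emb ⟨j, hj⟩ := by
      apply Fin.ext
      rw [this, hB]
      simp [hj]
    rw [this]
    exact hmem _
  · intro hp
    have hpmem : p ∈ s := by rw [hs]; simp [hp]
    have : ∃ x : Fin n, emb x = p := by
      have := Finset.range_orderEmbOfFin s hcard
      rw [← hemb] at this
      have h2 : p ∈ Set.range emb := by rw [this]; exact hpmem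
      exact h2
    obtain ⟨x, hx⟩ := this
    refine ⟨x.val, x.isLt, ?_⟩
    rw [hposB x.val x.isLt.le, hB]
    simp only [x.isLt, dif_pos]
    rw [← hx]

lemma rel_equiv (hn : 0 < n) :
    Equivalence (fun w w' : Fin (n + k) → Bool => ∃ r : Fin (n + k), ∀ i, w' i = w (i + r)) := by
  haveI : NeZero (n + k) := ⟨by omega⟩
  constructor
  · intro w; exact ⟨0, fun i => by rw [add_zero]⟩
  · rintro w w' ⟨r, hr⟩
    exact ⟨-r, fun i => by rw [hr (i + -r), add_assoc, neg_add_cancel, add_zero]⟩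
  · rintro w w' w'' ⟨r, hr⟩ ⟨r', hr'⟩
    exact ⟨r' + r, fun i => by rw [hr' i, hr (i + r'), add_assoc]⟩

lemma toNat_sum (E : ZMod n → ℤ) (h0 : ∀ v, 0 ≤ E v) (hdeg : ∑ v : ZMod n, E v = (k : ℤ)) :
    ∑ v : ZMod n, (E v).toNat = k := by
  have : ((∑ v : ZMod n, (E v).toNat : ℕ) : ℤ) = (k : ℤ) := by
    push_cast
    rw [Finset.sum_congr rfl fun v _ => Int.toNat_of_nonneg (h0 v)]
    exact hdeg
  exact_mod_cast this

end Words2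

/-- If `gcd(n,k) = 1`, then for each `j`, sending an effective divisor
`E ∈ |D_j + kq|` to the cyclic equivalence class (necklace) of its associated word is a
bijection onto the set of binary necklaces with `n` black and `k` white beads. -/
theorem stmt16 (n k : ℕ) [NeZero n] (hn : 0 < n) (hk : 0 < k)
    (hgcd : Nat.gcd n k = 1) (j : ZMod n) :
    Set.BijOn
      (fun E : ZMod n → ℤ =>
        Quot.mk (fun w w' : Fin (n + k) → Bool => ∃ r : Fin (n + k), ∀ i, w' i = w (i + r))
          (toWord n k (fun v => (E v).toNat)))
      {E : ZMod n → ℤ | (∀ v, 0 ≤ E v) ∧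
        ∃ f : ZMod n → ℤ,
          E - (fun v => (if v = j then 1 else 0) + (if v = 0 then (k : ℤ) - 1 else 0))
            = (cycLap n).mulVec f}
      {N | ∃ w : Fin (n + k) → Bool,
        N = Quot.mk (fun w w' : Fin (n + k) → Bool =>
              ∃ r : Fin (n + k), ∀ i, w' i = w (i + r)) w ∧
        (Finset.univ.filter fun i => w i = true).card = n} := by
  haveI : NeZero (n + k) := ⟨by omega⟩
  have hequiv := rel_equiv (n := n) (k := k) hn
  have hcop : Nat.Coprime k n := Nat.coprime_comm.mp hgcd
  set u : (ZMod n)ˣ := ZMod.unitOfCoprime k hcop with hu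
  have huk : (u : ZMod n) = (k : ZMod n) := ZMod.coe_unitOfCoprime k hcop
  refine ⟨?_, ?_, ?_⟩
  · -- MapsTo
    intro E hE
    obtain ⟨h0, hdeg, hsig⟩ := (mem_S_iff k j E).mp hE
    exact ⟨toWord n k (fun v => (E v).toNat), rfl,
      card_blacks hn _ (toNat_sum E h0 hdeg)⟩
  · -- InjOn
    intro E hE E' hE' hq
    obtain ⟨h0, hdeg, hsig⟩ := (mem_S_iff k j E).mp hE
    obtain ⟨h0', hdeg', hsig'⟩ := (mem_S_iff k j E').mp hE'
    set F : ZMod n → ℕ := fun v => (E v).toNat with hF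
    set F' : ZMod n → ℕ := fun v => (E' v).toNat with hF'
    have hFE : ∀ v, ((F v : ℤ)) = E v := fun v => Int.toNat_of_nonneg (h0 v)
    have hFE' : ∀ v, ((F' v : ℤ)) = E' v := fun v => Int.toNat_of_nonneg (h0' v)
    have hFk : ∑ v : ZMod n, F v = k := toNat_sum E h0 hdeg
    have hFk' : ∑ v : ZMod n, F' v = k := toNat_sum E' h0' hdeg'
    simp only at hq
    rw [Quot.eq, hequiv.eqvGen_iff] at hq
    obtain ⟨r, hr⟩ := hq
    have h0w : toWord n k F' 0 = true :=
      (toWord_iff F' 0).mpr ⟨0, hn, by simp [posE]⟩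
    have hrb : toWord n k F r = true := by
      have := hr 0
      rw [zero_add] at this
      rw [← this]
      exact h0w
    obtain ⟨t, htn, hrval⟩ := (toWord_iff F r).mp hrb
    have hreq : r = (⟨posE n F t, posE_lt F hFk htn⟩ : Fin (n + k)) := Fin.ext hrval
    have hword : toWord n k (fun v => F (v + (t : ZMod n))) = toWord n k F' := by
      funext i
      rw [toWord_shift hn F hFk htn i, ← hreq, ← hr i]
    have hFtk : ∑ v : ZMod n, F (v + (t : ZMod n)) = k := by
      rw [zmod_sum_shift F (t : ZMod n)]
      exact hFk
    have hFF : (fun v => F (v + (t : ZMod n))) = F' :=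
      word_determines hn _ F' hFtk hFk' hword
    -- sigma computation
    have hsE : sigZ (fun v => (F v : ℤ)) = j := by
      rw [show (fun v => ((F v : ℤ))) = E from funext hFE]
      exact hsig
    have hsE' : sigZ (fun v => (F' v : ℤ)) = j := by
      rw [show (fun v => ((F' v : ℤ))) = E' from funext hFE']
      exact hsig'
    have hshift := sigN_shift F hFk t
    rw [show (fun v => ((F (v + (t : ZMod n)) : ℤ))) = (fun v => (F' v : ℤ)) from
      funext fun v => by rw [← hFF], hsE', hsE] at hshift
    have htk : (t : ZMod n) * (k : ZMod n) = 0 := by linear_combination hshift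
    have ht0 : (t : ZMod n) = 0 := by
      have := congrArg (fun x => x * ((u⁻¹ : (ZMod n)ˣ) : ZMod n)) htk
      simp only [zero_mul, mul_assoc, ← huk, Units.mul_inv, mul_one] at this
      exact this
    have htz : t = 0 := by
      rw [ZMod.natCast_eq_zero_iff] at ht0
      exact Nat.eq_zero_of_dvd_of_lt ht0 htn
    have : F = F' := by
      rw [← hFF, htz]
      funext v
      simp
    funext v
    rw [← hFE v, ← hFE' v, this]
  · -- SurjOn
    rintro N ⟨w, hN, hcard⟩
    have hblack : ∃ r : Fin (n + k), w r = true := by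
      have : (Finset.univ.filter fun i => w i = true).Nonempty := by
        rw [← Finset.card_pos, hcard]; exact hn
      obtain ⟨r, hr⟩ := this
      exact ⟨r, (Finset.mem_filter.mp hr).2⟩
    obtain ⟨r, hrb⟩ := hblack
    set w0 : Fin (n + k) → Bool := fun i => w (i + r) with hw0
    have hw00 : w0 ⟨0, by omega⟩ = true := by
      rw [hw0]
      have : ((⟨0, by omega⟩ : Fin (n + k)) + r) = r := by
        apply Fin.ext
        rw [Fin.val_add]
        simp [Nat.mod_eq_of_lt r.isLt]
      simp only [this]
      exact hrb
    have hcard0 : (Finset.univ.filter fun i => w0 i = true).card = n := by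
      refine Eq.trans ?_ hcard
      apply Finset.card_bij' (fun i _ => i + r) (fun i _ => i - r)
      · intro a ha
        simp only [Finset.mem_filter, Finset.mem_univ, true_and] at ha ⊢
        exact ha
      · intro a ha
        simp only [Finset.mem_filter, Finset.mem_univ, true_and] at ha ⊢
        rw [hw0]
        simp only [sub_add_cancel]
        exact ha
      · intro a _; rw [add_sub_cancel_right]
      · intro a _; rw [sub_add_cancel]
    obtain ⟨E₀, hE₀k, hwE₀⟩ := exists_divisor hn hk w0 hcard0 hw00
    set c : ZMod n := sigZ (fun v => (E₀ v : ℤ)) with hc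
    set t : ZMod n := (c - j) * ((u⁻¹ : (ZMod n)ˣ) : ZMod n) with ht
    set E : ZMod n → ℕ := fun v => E₀ (v + ((t.val : ℕ) : ZMod n)) with hE
    have htcast : ((t.val : ℕ) : ZMod n) = t := ZMod.natCast_rightInverse t
    have hEk : ∑ v : ZMod n, E v = k := by
      rw [hE, zmod_sum_shift E₀]
      exact hE₀k
    have hsigE : sigZ (fun v => (E v : ℤ)) = j := by
      rw [hE]
      have := sigN_shift E₀ hE₀k t.val
      rw [this, htcast, ht]
      rw [← huk]
      rw [mul_assoc, Units.inv_mul, mul_one]  -- check names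
      rw [hc]
      ring
    refine ⟨fun v => (E v : ℤ), ?_, ?_⟩
    · apply (mem_S_iff k j _).mpr
      refine ⟨fun v => Int.natCast_nonneg _, ?_, hsigE⟩
      push_cast
      exact_mod_cast congrArg (Nat.cast : ℕ → ℤ) hEk
    · simp only
      have htoNat : (fun v => ((E v : ℤ)).toNat) = E := funext fun v => Int.toNat_natCast _
      rw [htoNat]
      have rel1 : ∃ rr : Fin (n + k), ∀ i, toWord n k E i = w (i + rr) := by
        have hrot := toWord_shift hn E₀ hE₀k (t := t.val) t.val_lt
        refine ⟨(⟨posE n E₀ t.val, posE_lt E₀ hE₀k t.val_lt⟩ : Fin (n + k)) + r, fun i => ?_⟩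
        rw [hE]
        rw [hrot i, hwE₀, hw0]
        show w ((i + _) + r) = _
        rw [add_assoc]
      obtain ⟨rr, hrr⟩ := rel1
      rw [hN]
      exact (Quot.sound ⟨rr, hrr⟩).symm
end

section
/- Let n ≥ 2 and let η = (1, 2, ..., n) ∈ ℤ^n and 1⃗ = (1,...,1) ∈ ℤ^n. For divisors D on the cycle graph C_n (with q = v_n and D_j = v_j − q), D is linearly equivalent to D_j + kq if and only if D·1⃗ = k and D·η ≡ j (mod n). -/
lemma cycLap_mulVec (n : ℕ) [NeZero n] (f : ZMod n → ℤ) (i : ZMod n) :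
    (cycLap n).mulVec f i = 2 * f i - f (i + 1) - f (i - 1) := by
  simp [cycLap, Matrix.mulVec, dotProduct, sub_mul, Finset.sum_sub_distrib,
    ite_mul, Finset.sum_ite_eq, Finset.sum_ite_eq']

lemma sum_zmod {M : Type*} [AddCommMonoid M] (n : ℕ) [NeZero n] (φ : ZMod n → M) :
    ∑ v : ZMod n, φ v = ∑ t ∈ Finset.range n, φ ↑t := by
  refine Finset.sum_nbij' (fun v => v.val) (fun t => (t : ZMod n)) ?_ ?_ ?_ ?_ ?_
  all_goals simp [ZMod.val_lt, ZMod.natCast_val, ZMod.cast_id, ZMod.val_natCast_of_lt]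
  intro a ha
  exact Nat.mod_eq_of_lt ha

lemma key_fwd (n : ℕ) [NeZero n] (f : ZMod n → ℤ) :
    (∑ v, (cycLap n).mulVec f v) = 0 ∧
      ((∑ v : ZMod n, (v.val : ℤ) * (cycLap n).mulVec f v : ℤ) : ZMod n) = 0 := by
  constructor
  · calc ∑ v, (cycLap n).mulVec f v = ∑ v : ZMod n, (2 * f v - f (v+1) - f (v-1)) := by
          simp [cycLap_mulVec]
      _ = 2 * ∑ v : ZMod n, f v - (∑ v : ZMod n, f (v+1)) - (∑ v : ZMod n, f (v-1)) := by
          simp [Finset.sum_sub_distrib, Finset.mul_sum]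
      _ = 0 := by
          rw [Fintype.sum_equiv (Equiv.addRight 1) (fun v : ZMod n => f (v+1)) f (fun _ => rfl),
            Fintype.sum_equiv (Equiv.subRight 1) (fun v : ZMod n => f (v-1)) f (fun _ => rfl)]
          ring
  · have : ((∑ v : ZMod n, (v.val : ℤ) * (cycLap n).mulVec f v : ℤ) : ZMod n)
        = ∑ v : ZMod n, v * (2 * ((f v : ℤ) : ZMod n) - ((f (v+1) : ℤ) : ZMod n)
            - ((f (v-1) : ℤ) : ZMod n)) := by
      push_cast [cycLap_mulVec]
      refine Finset.sum_congr rfl fun v _ => ?_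
      simp [ZMod.natCast_val, ZMod.cast_id]
    rw [this]
    set F : ZMod n → ZMod n := fun v => ((f v : ℤ) : ZMod n) with hF
    have h1 : ∑ v : ZMod n, v * F (v+1) = ∑ v : ZMod n, (v - 1) * F v := by
      refine Fintype.sum_equiv (Equiv.addRight 1) _ _ (fun v => ?_)
      simp
    have h2 : ∑ v : ZMod n, v * F (v-1) = ∑ v : ZMod n, (v + 1) * F v := by
      refine Fintype.sum_equiv (Equiv.subRight 1) _ _ (fun v => ?_)
      simp
    calc ∑ v : ZMod n, v * (2 * F v - F (v+1) - F (v-1))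
        = 2 * ∑ v : ZMod n, v * F v - (∑ v : ZMod n, v * F (v+1))
            - (∑ v : ZMod n, v * F (v-1)) := by
          simp [Finset.sum_sub_distrib, Finset.mul_sum, mul_sub, mul_left_comm, mul_comm,
            mul_assoc]
      _ = 0 := by
          rw [h1, h2, Finset.mul_sum, ← Finset.sum_sub_distrib, ← Finset.sum_sub_distrib]
          refine Finset.sum_eq_zero fun v _ => ?_
          ring

lemma key_bwd (n : ℕ) [NeZero n] (hn : 2 ≤ n) (g : ZMod n → ℤ)
    (hs : (∑ v, g v) = 0)
    (hm : ((∑ v : ZMod n, (v.val : ℤ) * g v : ℤ) : ZMod n) = 0) :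
    ∃ f : ZMod n → ℤ, g = (cycLap n).mulVec f := by
  obtain ⟨c, hc⟩ := (ZMod.intCast_zmod_eq_zero_iff_dvd _ n).mp hm
  set S : ℕ → ℤ := fun m => ∑ t ∈ Finset.range m, g ↑t with hSdef
  have hSn : S n = 0 := by
    show ∑ t ∈ Finset.range n, g ↑t = 0
    rw [← sum_zmod]; exact hs
  have hcsum : ∑ t ∈ Finset.range n, (t : ℤ) * g ↑t = n * c := by
    rw [← hc, sum_zmod n (fun v => (v.val : ℤ) * g v)]
    refine Finset.sum_congr rfl fun t ht => ?_
    rw [ZMod.val_natCast_of_lt (Finset.mem_range.mp ht)]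
  have hB : ∀ m, ∑ i ∈ Finset.range m, S (i + 1)
      = ∑ t ∈ Finset.range m, ((m : ℤ) - t) * g ↑t := by
    intro m
    induction m with
    | zero => simp
    | succ m ih =>
      rw [Finset.sum_range_succ, ih]
      have h1 : ∀ t ∈ Finset.range (m + 1), (((m : ℕ) + 1 : ℤ) - t) * g ↑t
          = ((m : ℤ) - t) * g ↑t + g ↑t := by intro t _; ring
      have h2 : S (m + 1) = ∑ t ∈ Finset.range (m + 1), g ↑t := rfl
      push_cast
      rw [Finset.sum_congr rfl h1, Finset.sum_add_distrib, Finset.sum_range_succ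
        (fun t => ((m : ℤ) - t) * g ↑t), h2]
      ring
  have hBn : ∑ i ∈ Finset.range n, S (i + 1) = -(n * c) := by
    rw [hB n]
    have h1 : ∀ t ∈ Finset.range n, ((n : ℤ) - t) * g ↑t = n * g ↑t - t * g ↑t := by
      intro t _; ring
    rw [Finset.sum_congr rfl h1, Finset.sum_sub_distrib, ← Finset.mul_sum, hcsum]
    have h2 : ∑ t ∈ Finset.range n, g ↑t = 0 := hSn
    rw [h2]
    ring
  set F : ℕ → ℤ := fun m => -c * m - ∑ i ∈ Finset.range m, S (i + 1) with hFdef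
  have hF0 : F 0 = 0 := by simp [hFdef]
  have hFn : F n = 0 := by
    show -c * (n : ℤ) - ∑ i ∈ Finset.range n, S (i + 1) = 0
    rw [hBn]; ring
  have hstep : ∀ m, F (m + 1) = F m - c - S (m + 1) := by
    intro m
    show -c * ((m : ℕ) + 1 : ℤ) - ∑ i ∈ Finset.range (m + 1), S (i + 1) = _
    rw [Finset.sum_range_succ]
    ring
  refine ⟨fun v => F v.val, funext fun i => ?_⟩
  rw [cycLap_mulVec]
  have hiv : (↑(i.val) : ZMod n) = i := by simp [ZMod.natCast_val, ZMod.cast_id]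
  have hvlt : i.val < n := ZMod.val_lt i
  have hn1 : n - 1 + 1 = n := by omega
  have hFn1 : F (n - 1) = c := by
    have h := hstep (n - 1)
    rw [hn1, hFn, hSn] at h
    linarith
  have hcastn1 : ((n - 1 : ℕ) : ZMod n) + 1 = 0 := by
    rw [Nat.cast_sub (by omega : 1 ≤ n)]
    simp
  by_cases h0 : i.val = 0
  · -- i = 0
    have hi0 : i = 0 := by rw [← hiv, h0]; simp
    have hip : (i + 1).val = 1 := by
      rw [hi0, zero_add, ZMod.val_one_eq_one_mod, Nat.mod_eq_of_lt hn]
    have him : (i - 1).val = n - 1 := by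
      have h3 : i - 1 = ((n - 1 : ℕ) : ZMod n) := by
        rw [hi0]; linear_combination -hcastn1
      rw [h3, ZMod.val_natCast_of_lt (by omega)]
    rw [h0, hip, him, hF0, hFn1]
    have hF1 : F 1 = -c - S 1 := by
      have h := hstep 0
      rw [hF0] at h
      simpa using h
    have hS1 : S 1 = g 0 := by
      show ∑ t ∈ Finset.range 1, g ↑t = g 0
      simp
    rw [hF1, hS1, hi0]
    ring
  · by_cases hlast : i.val = n - 1
    · -- i = ↑(n-1)
      have hieq : i = ((n - 1 : ℕ) : ZMod n) := by rw [← hiv, hlast]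
      have hip : (i + 1).val = 0 := by
        rw [hieq, hcastn1, ZMod.val_zero]
      have him : (i - 1).val = n - 2 := by
        have h3 : i - 1 = ((n - 2 : ℕ) : ZMod n) := by
          rw [hieq, Nat.cast_sub (by omega : 1 ≤ n), Nat.cast_sub (by omega : 2 ≤ n)]
          push_cast
          ring
        rw [h3, ZMod.val_natCast_of_lt (by omega)]
      rw [hlast, hip, him, hF0, hFn1]
      have h2 : n - 2 + 1 = n - 1 := by omega
      have hFn2 : F (n - 2) = 2 * c + S (n - 1) := by
        have h := hstep (n - 2)
        rw [h2, hFn1] at h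
        linarith
      have hSg : S n = S (n - 1) + g ↑(n - 1 : ℕ) := by
        have h := Finset.sum_range_succ (fun t => g (↑t : ZMod n)) (n - 1)
        rw [hn1] at h
        exact h
      rw [hFn2]
      have hgi : g i = g ↑(n - 1 : ℕ) := by rw [hieq]
      rw [hgi, hSn] at *
      rw [hgi]
      linarith [hSg]
    · -- middle case: 0 < i.val < n - 1
      have hip : (i + 1).val = i.val + 1 := by
        have h3 : i + 1 = ((i.val + 1 : ℕ) : ZMod n) := by push_cast [hiv]; ring
        rw [h3, ZMod.val_natCast_of_lt (by omega)]
      have him : (i - 1).val = i.val - 1 := by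
        have h3 : i - 1 = ((i.val - 1 : ℕ) : ZMod n) := by
          rw [Nat.cast_sub (by omega : 1 ≤ i.val), hiv]
          push_cast
          ring
        rw [h3, ZMod.val_natCast_of_lt (by omega)]
      rw [hip, him]
      have hA := hstep i.val
      have hBs := hstep (i.val - 1)
      have hv1 : i.val - 1 + 1 = i.val := by omega
      rw [hv1] at hBs
      have hSg : S (i.val + 1) = S i.val + g i := by
        have h := Finset.sum_range_succ (fun t => g (↑t : ZMod n)) i.val
        rw [hiv] at h
        exact h
      linarith

lemma key (n : ℕ) [NeZero n] (hn : 2 ≤ n) (g : ZMod n → ℤ) :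
    (∃ f : ZMod n → ℤ, g = (cycLap n).mulVec f)
      ↔ ((∑ v, g v) = 0 ∧ ((∑ v : ZMod n, (v.val : ℤ) * g v : ℤ) : ZMod n) = 0) := by
  constructor
  · rintro ⟨f, rfl⟩
    exact key_fwd n f
  · rintro ⟨a, b⟩
    exact key_bwd n hn g a b

/-- A divisor `D` on `C_n` is linearly equivalent to `D_j + kq`
(where `D_j = v_j - q`, `q = v_n = 0`) iff `D·1⃗ = k` and `D·η ≡ j (mod n)`, where
`η = (1,2,…,n)`. -/
theorem stmt17 (n : ℕ) [NeZero n] (hn : 2 ≤ n) (D : ZMod n → ℤ) (j : ZMod n) (k : ℤ) :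
    (∃ f : ZMod n → ℤ,
        D - (fun v => (if v = j then 1 else 0) - (if v = 0 then 1 else 0)
              + (if v = 0 then k else 0))
          = (cycLap n).mulVec f)
      ↔ ((∑ v, D v) = k ∧
          ((∑ v : ZMod n, (v.val : ℤ) * D v : ℤ) : ZMod n) = j) := by
  set E : ZMod n → ℤ := fun v => (if v = j then 1 else 0) - (if v = 0 then 1 else 0)
      + (if v = 0 then k else 0) with hE
  rw [key n hn (D - E)]
  have hE1 : ∑ v, E v = k := by
    simp [hE, Finset.sum_add_distrib, Finset.sum_sub_distrib, Finset.sum_ite_eq,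
      Finset.sum_ite_eq']
  have hE2 : ∑ v, (v.val : ℤ) * E v = (j.val : ℤ) := by
    simp [hE, mul_sub, mul_add, mul_ite, Finset.sum_add_distrib, Finset.sum_sub_distrib,
      Finset.sum_ite_eq, Finset.sum_ite_eq', ZMod.val_zero]
  have hsub1 : ∑ v, (D - E) v = (∑ v, D v) - k := by
    simp only [Pi.sub_apply, Finset.sum_sub_distrib, hE1]
  have hsub2 : ∑ v : ZMod n, (v.val : ℤ) * (D - E) v
      = (∑ v : ZMod n, (v.val : ℤ) * D v) - (j.val : ℤ) := by
    simp only [Pi.sub_apply, mul_sub, Finset.sum_sub_distrib, hE2]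
  rw [hsub1, hsub2]
  have hj : (((j.val : ℤ)) : ZMod n) = j := by
    simp [ZMod.natCast_val, ZMod.cast_id]
  constructor
  · rintro ⟨a, b⟩
    refine ⟨by linarith [sub_eq_zero.mp a], ?_⟩
    rw [Int.cast_sub, sub_eq_zero] at b
    rw [b, hj]
  · rintro ⟨a, b⟩
    refine ⟨by rw [a]; ring, ?_⟩
    rw [Int.cast_sub, hj, b, sub_self]
end

section
/- Let N be a binary necklace with n black and k white beads, with code [a_1...a_n] (the necklace of gap-lengths between black beads). Let j be an integer, m_j = (n+k)/gcd(n,k,j), and n_j = n/gcd(n,j). Then the period of N is divisible by m_j if and only if the period of code(N) is divisible by n_j. -/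
/-- The period of a cyclic word `f : ZMod m → C`: the least positive `i` with
`f(x + i) = f(x)` for all `x`. -/
noncomputable def cyclicPeriod {m : ℕ} {C : Type*} (f : ZMod m → C) : ℕ :=
  sInf {i : ℕ | 0 < i ∧ ∀ x : ZMod m, f (x + (i : ZMod m)) = f x}

/-- The binary word `b w^{a_1} b w^{a_2} ⋯ b w^{a_n}` (black = `true`) whose code
(necklace of gap lengths) is `c`: position `p` is black iff `p = t + c_1 + ⋯ + c_t`
for some `0 ≤ t < n`. -/
def wordOfCode (n k : ℕ) (c : ZMod n → ℕ) : ZMod (n + k) → Bool :=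
  fun p => decide (∃ t < n,
    p = ((t + ∑ i ∈ Finset.range t, c (i : ZMod n) : ℕ) : ZMod (n + k)))

namespace S18

set_option linter.unusedSectionVars false
variable {n : ℕ} [NeZero n] (c : ZMod n → ℕ)

/-- position of t-th black bead -/
def e (t : ℕ) : ℕ := t + ∑ i ∈ Finset.range t, c (i : ZMod n)

/-- code period -/
def IsCP (r : ℕ) : Prop := ∀ v : ZMod n, c (v + (r : ZMod n)) = c v

variable {c}

lemma e_zero : e c 0 = 0 := by simp [e]

lemma e_succ (t : ℕ) : e c (t + 1) = e c t + 1 + c (t : ZMod n) := by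
  simp [e, Finset.sum_range_succ]; ring

lemma e_strictMono : StrictMono (e c) :=
  strictMono_nat_of_lt_succ fun t => by rw [e_succ]; omega

lemma IsCP.zero : IsCP c 0 := fun v => by simp

lemma IsCP.n' : IsCP c n := fun v => by simp

lemma IsCP.add {a b : ℕ} (ha : IsCP c a) (hb : IsCP c b) : IsCP c (a + b) := by
  intro v
  push_cast
  rw [add_comm (a : ZMod n) b, ← add_assoc, ha (v + b), hb v]

lemma IsCP.sub {a b : ℕ} (ha : IsCP c a) (hb : IsCP c b) (hab : a ≤ b) : IsCP c (b - a) := by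
  intro v
  have h1 := ha (v + (b - a : ℕ))
  have h2 := hb v
  have : ((b - a : ℕ) : ZMod n) + (a : ZMod n) = (b : ZMod n) := by
    rw [← Nat.cast_add]; congr 1; omega
  rw [add_assoc, this] at h1
  rw [← h1, h2]

lemma IsCP.mul {a : ℕ} (ha : IsCP c a) (q : ℕ) : IsCP c (q * a) := by
  induction q with
  | zero => simpa using IsCP.zero
  | succ q ih => have := ih.add ha; rwa [show q * a + a = (q+1) * a by ring] at this

lemma e_add {r : ℕ} (hr : IsCP c r) (t : ℕ) : e c (r + t) = e c r + e c t := by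
  unfold e
  rw [Finset.sum_range_add]
  have : ∀ i : ℕ, c ((r + i : ℕ) : ZMod n) = c (i : ZMod n) := by
    intro i; push_cast; rw [add_comm]; exact hr i
  simp only [this]
  ring

lemma e_mul {d : ℕ} (hd : IsCP c d) (q : ℕ) : e c (q * d) = q * e c d := by
  induction q with
  | zero => simp [e_zero]
  | succ q ih => rw [show (q+1) * d = d + q * d by ring, e_add hd, ih]; ring

end S18

namespace S18
set_option linter.unusedSectionVars false
variable {n : ℕ} [NeZero n] {c : ZMod n → ℕ} {k : ℕ}

lemma e_n (hk : (∑ v, c v) = k) : e c n = n + k := by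
  unfold e
  congr 1
  rw [← hk]
  exact Finset.sum_nbij' (fun i => (i : ZMod n)) (fun v => v.val)
    (fun a _ => Finset.mem_univ _)
    (fun v _ => Finset.mem_range.mpr (ZMod.val_lt v))
    (fun a ha => ZMod.val_cast_of_lt (Finset.mem_range.mp ha))
    (fun v _ => ZMod.natCast_zmod_val v)
    (fun a _ => rfl)

lemma e_lt (hk : (∑ v, c v) = k) {t : ℕ} (ht : t < n) : e c t < n + k := by
  rw [← e_n hk]; exact e_strictMono ht

lemma word_eq (hk : (∑ v, c v) = k) (p : ℕ) :
    wordOfCode n k c (p : ZMod (n+k)) = true ↔ ∃ t : ℕ, p = e c t := by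
  rw [wordOfCode, decide_eq_true_iff]
  constructor
  · rintro ⟨t, htn, hp⟩
    rw [show ((t + ∑ i ∈ Finset.range t, c (i : ZMod n) : ℕ) : ZMod (n+k)) = (e c t : ZMod (n+k)) from rfl,
      ZMod.natCast_eq_natCast_iff] at hp
    have h1 : e c t < n + k := e_lt hk htn
    have h2 : p % (n+k) = e c t := by
      rw [Nat.ModEq] at hp
      rwa [Nat.mod_eq_of_lt h1] at hp
    refine ⟨(p/(n+k)) * n + t, ?_⟩
    rw [e_add ((IsCP.n').mul _), e_mul IsCP.n', e_n hk]
    calc p = (n+k) * (p/(n+k)) + p % (n+k) := (Nat.div_add_mod p (n+k)).symm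
      _ = (p/(n+k)) * (n+k) + e c t := by rw [h2]; ring
  · rintro ⟨t, rfl⟩
    refine ⟨t % n, Nat.mod_lt _ (Nat.pos_of_ne_zero (NeZero.ne n)), ?_⟩
    show (e c t : ZMod (n+k)) = (e c (t % n) : ZMod (n+k))
    have h : e c t = (t / n) * (n + k) + e c (t % n) := by
      conv_lhs => rw [← Nat.mod_add_div t n]
      rw [add_comm (t % n), show n * (t/n) = (t/n) * n by ring,
        e_add ((IsCP.n').mul _), e_mul IsCP.n', e_n hk]
    rw [h, Nat.cast_add, Nat.cast_mul, ZMod.natCast_self]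
    simp

end S18

namespace S18
set_option linter.unusedSectionVars false
variable {n : ℕ} [NeZero n] {c : ZMod n → ℕ} {k : ℕ}

lemma black_add (hk : (∑ v, c v) = k) {r : ℕ} (hr : IsCP c r) (x : ZMod (n+k))
    (hx : wordOfCode n k c x = true) :
    wordOfCode n k c (x + ((e c r : ℕ) : ZMod (n+k))) = true := by
  haveI : NeZero (n + k) := ⟨by have := NeZero.ne n; omega⟩
  have hx' : x = ((x.val : ℕ) : ZMod (n+k)) := (ZMod.natCast_zmod_val x).symm
  rw [hx'] at hx ⊢
  rw [← Nat.cast_add]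
  obtain ⟨t, ht⟩ := (word_eq hk _).mp hx
  rw [word_eq hk]
  exact ⟨t + r, by rw [ht, add_comm t r, e_add hr]; ring⟩

lemma mod_isCP {r : ℕ} (hr : IsCP c r) : IsCP c (r % n) := by
  have h2 : IsCP c (r - r/n*n) :=
    (IsCP.n'.mul (r/n)).sub hr (Nat.div_mul_le_self r n)
  rwa [← Nat.eq_sub_of_add_eq (Nat.mod_add_div' r n)] at h2

lemma e_split (hk : (∑ v, c v) = k) (r : ℕ) :
    e c r = (r/n) * (n+k) + e c (r % n) := by
  conv_lhs => rw [← Nat.div_add_mod' r n]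
  rw [e_add ((IsCP.n').mul _), e_mul IsCP.n', e_n hk]

lemma word_shift (hk : (∑ v, c v) = k) {r : ℕ} (hr : IsCP c r) (x : ZMod (n+k)) :
    wordOfCode n k c (x + ((e c r : ℕ) : ZMod (n+k))) = wordOfCode n k c x := by
  rw [Bool.eq_iff_iff]
  constructor
  · intro h
    have hu : IsCP c (r % n) := mod_isCP hr
    have hs : IsCP c (n - r % n) :=
      hu.sub IsCP.n' (le_of_lt (Nat.mod_lt _ (Nat.pos_of_ne_zero (NeZero.ne n))))
    have hsum : e c r + e c (n - r % n) = ((r/n) + 1) * (n+k) := by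
      rw [e_split hk r, add_assoc, ← e_add hu, show r % n + (n - r % n) = n by
        have := Nat.mod_lt r (Nat.pos_of_ne_zero (NeZero.ne n)); omega, e_n hk]
      ring
    have h2 := black_add hk hs _ h
    rw [add_assoc, ← Nat.cast_add, hsum, Nat.cast_mul, ZMod.natCast_self, mul_zero,
      add_zero] at h2
    exact h2
  · exact black_add hk hr x

end S18

namespace S18
set_option linter.unusedSectionVars false
variable {n : ℕ} [NeZero n] {c : ZMod n → ℕ} {k : ℕ}

lemma hnpos : 0 < n := Nat.pos_of_ne_zero (NeZero.ne n)

lemma period_exists (hk : (∑ v, c v) = k) {i : ℕ}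
    (hi : ∀ x : ZMod (n+k), wordOfCode n k c (x + (i : ZMod (n+k))) = wordOfCode n k c x) :
    ∃ r : ℕ, IsCP c r ∧ (i : ZMod (n+k)) = ((e c r : ℕ) : ZMod (n+k)) := by
  haveI : NeZero (n + k) := ⟨by have := NeZero.ne n; omega⟩
  by_cases h0 : i % (n+k) = 0
  · refine ⟨0, IsCP.zero, ?_⟩
    rw [e_zero, ← ZMod.natCast_mod i (n+k), h0]
  · set i' := i % (n+k) with hi'def
    have hipos : 0 < i' := Nat.pos_of_ne_zero h0
    have hilt : i' < n + k := Nat.mod_lt _ (by have := hnpos (n := n); omega)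
    have hcast : ((i' : ℕ) : ZMod (n+k)) = (i : ZMod (n+k)) := ZMod.natCast_mod i (n+k)
    have hshift : ∀ p : ℕ,
        wordOfCode n k c ((p + i' : ℕ) : ZMod (n+k)) = wordOfCode n k c (p : ZMod (n+k)) := by
      intro p
      rw [Nat.cast_add, hcast]
      exact hi (p : ZMod (n+k))
    have hE : ∀ p : ℕ, (∃ t, p + i' = e c t) ↔ (∃ t, p = e c t) := by
      intro p
      rw [← word_eq hk, ← word_eq hk, hshift p]
    have hf : ∀ t : ℕ, ∃ u : ℕ, e c u = e c t + i' := by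
      intro t
      obtain ⟨u, hu⟩ := (hE (e c t)).mpr ⟨t, rfl⟩
      exact ⟨u, hu.symm⟩
    choose f hfe using hf
    have hmono : StrictMono f := fun a b hab => (e_strictMono (c := c)).lt_iff_lt.mp
      (by rw [hfe, hfe]; exact Nat.add_lt_add_right (e_strictMono hab) _)
    have hgt : ∀ t, t < f t := fun t => (e_strictMono (c := c)).lt_iff_lt.mp (by rw [hfe]; omega)
    have hlt : ∀ t, f t < t + n := by
      intro t
      apply (e_strictMono (c := c)).lt_iff_lt.mp
      have hadd : e c (t + n) = e c n + e c t := by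
        rw [add_comm t n]; exact e_add (IsCP.n' (c := c)) t
      rw [hfe, hadd, e_n hk]
      omega
    have hsurj : ∀ u, n ≤ u → ∃ t, f t = u := by
      intro u hu
      have h1 : i' ≤ e c u := by
        have h2 : n + k ≤ e c u := by
          rw [← e_n hk]
          exact (e_strictMono (c := c)).le_iff_le.mpr hu
        omega
      obtain ⟨t, ht⟩ := (hE (e c u - i')).mp ⟨u, by omega⟩
      exact ⟨t, (e_strictMono (c := c)).injective (by rw [hfe, ← ht]; omega)⟩
    have hstep : ∀ t, n ≤ t → f (t+1) = f t + 1 := by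
      intro t ht
      have h1 : f t < f (t+1) := hmono (Nat.lt_succ_self t)
      by_contra hne
      obtain ⟨t', ht'⟩ := hsurj (f t + 1) (by have := hgt t; omega)
      have h2 : t < t' := hmono.lt_iff_lt.mp (by omega)
      have h3 : t' < t + 1 := hmono.lt_iff_lt.mp (by omega)
      omega
    have hlin : ∀ t, n ≤ t → f t = t + (f n - n) := by
      intro t ht
      induction t, ht using Nat.le_induction with
      | base => have := hgt n; omega
      | succ t ht ih => rw [hstep t ht, ih]; omega
    set r := f n - n with hrdef
    have hr1 : 0 < r := by have := hgt n; omega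
    have hr2 : r < n := by have := hlt n; omega
    have key : ∀ t, n ≤ t → e c (t + r) = e c t + i' := by
      intro t ht
      rw [← hfe t, hlin t ht]
    have hcnat : ∀ t : ℕ, n ≤ t → c (((t + r : ℕ) : ZMod n)) = c ((t : ℕ) : ZMod n) := by
      intro t ht
      have k1 := key t ht
      have k2 := key (t+1) (by omega)
      rw [show t + 1 + r = (t + r) + 1 by ring] at k2
      have s1 := e_succ (c := c) (t + r)
      have s2 := e_succ (c := c) t
      omega
    refine ⟨r, ?_, ?_⟩
    · intro v
      have hv : ((v.val + n : ℕ) : ZMod n) = v := by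
        push_cast [ZMod.natCast_self]
        simp [ZMod.natCast_zmod_val]
      have := hcnat (v.val + n) (by omega)
      rwa [Nat.cast_add, hv] at this
    · have k1 := key n le_rfl
      rw [add_comm n r, e_add (by
        intro v
        have hv : ((v.val + n : ℕ) : ZMod n) = v := by
          push_cast [ZMod.natCast_self]
          simp [ZMod.natCast_zmod_val]
        have := hcnat (v.val + n) (by omega)
        rwa [Nat.cast_add, hv] at this)] at k1
      have : i' = e c r := by omega
      rw [← hcast, this]

end S18

namespace S18
set_option linter.unusedSectionVars false
variable {n : ℕ} [NeZero n] {c : ZMod n → ℕ} {k : ℕ}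

lemma cp_mem : 0 < cyclicPeriod c ∧ IsCP c (cyclicPeriod c) :=
  Nat.sInf_mem (⟨n, Nat.pos_of_ne_zero (NeZero.ne n), IsCP.n'⟩ :
    Set.Nonempty {i : ℕ | 0 < i ∧ ∀ x : ZMod n, c (x + (i : ZMod n)) = c x})

lemma cp_dvd {r : ℕ} (hr : IsCP c r) : cyclicPeriod c ∣ r := by
  obtain ⟨hd0, hd⟩ := cp_mem (c := c)
  set d := cyclicPeriod c with hddef
  rcases Nat.eq_zero_or_pos (r % d) with h | h
  · exact Nat.dvd_of_mod_eq_zero h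
  · exfalso
    have hmod : IsCP c (r % d) := by
      have h2 : IsCP c (r - r/d*d) := (hd.mul (r/d)).sub hr (Nat.div_mul_le_self r d)
      rwa [← Nat.eq_sub_of_add_eq (Nat.mod_add_div' r d)] at h2
    have h3 : d ≤ r % d := Nat.sInf_le ⟨h, hmod⟩
    have h4 : r % d < d := Nat.mod_lt r hd0
    omega

lemma word_period (hk : (∑ v, c v) = k) :
    cyclicPeriod (wordOfCode n k c) = e c (cyclicPeriod c) := by
  haveI : NeZero (n + k) := ⟨by have := NeZero.ne n; omega⟩
  obtain ⟨hd0, hd⟩ := cp_mem (c := c)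
  set d := cyclicPeriod c with hddef
  have hdn : d ∣ n := cp_dvd IsCP.n'
  have hp : n / d * d = n := Nat.div_mul_cancel hdn
  have hnk : n / d * e c d = n + k := by
    have h1 : e c (n / d * d) = n / d * e c d := e_mul hd _
    rw [hp, e_n hk] at h1
    exact h1.symm
  have hedm : e c d ∣ n + k := Dvd.intro_left _ hnk
  have hed0 : 0 < e c d := by
    have : e c 0 < e c d := e_strictMono hd0
    rwa [e_zero] at this
  apply le_antisymm
  · exact Nat.sInf_le ⟨hed0, fun x => word_shift hk hd x⟩
  · have hne : Set.Nonempty {i : ℕ | 0 < i ∧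
        ∀ x : ZMod (n+k), wordOfCode n k c (x + (i : ZMod (n+k))) = wordOfCode n k c x} :=
      ⟨n + k, by have := Nat.pos_of_ne_zero (NeZero.ne n); omega, fun x => by rw [ZMod.natCast_self, add_zero]⟩
    obtain ⟨hpos, hper⟩ := Nat.sInf_mem hne
    obtain ⟨r, hr, hcast⟩ := period_exists hk hper
    have hdr : d ∣ r := cp_dvd hr
    have her : e c r = r / d * e c d := by
      have h1 : e c (r / d * d) = r / d * e c d := e_mul hd _
      rwa [Nat.div_mul_cancel hdr] at h1
    have h1 : e c d ∣ e c r := her ▸ Dvd.intro_left _ rfl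
    have hmm : sInf _ % (n+k) = e c r % (n+k) := (ZMod.natCast_eq_natCast_iff _ _ _).mp hcast
    have h2 : e c d ∣ e c r % (n+k) := (Nat.dvd_mod_iff hedm).mpr h1
    have h3 : e c d ∣ sInf _ := (Nat.dvd_mod_iff hedm).mp (hmm ▸ h2)
    exact Nat.le_of_dvd hpos h3

end S18

/-- For a binary necklace `N` with `n` black and `k` white beads and
code `c`, and `j ∈ [n]`, with `m_j = (n+k)/gcd(n,k,j)` and `n_j = n/gcd(n,j)`:
`m_j ∣ period(N)` iff `n_j ∣ period(code N)`. -/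
theorem stmt18 (n k j : ℕ) [NeZero n] (c : ZMod n → ℕ)
    (hk : (∑ v, c v) = k) (hj : 1 ≤ j) (hjn : j ≤ n) :
    ((n + k) / Nat.gcd (Nat.gcd n k) j ∣ cyclicPeriod (wordOfCode n k c))
      ↔ (n / Nat.gcd n j ∣ cyclicPeriod c) := by
  have hn0 : 0 < n := Nat.pos_of_ne_zero (NeZero.ne n)
  rw [S18.word_period hk]
  obtain ⟨hd0, hd⟩ := S18.cp_mem (c := c)
  set d := cyclicPeriod c with hddef
  have hdn : d ∣ n := S18.cp_dvd S18.IsCP.n'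
  have hp : n / d * d = n := Nat.div_mul_cancel hdn
  have hnk : n / d * S18.e c d = n + k := by
    have h1 : S18.e c (n / d * d) = n / d * S18.e c d := S18.e_mul hd _
    rw [hp, S18.e_n hk] at h1
    exact h1.symm
  have hdle : d ≤ S18.e c d := Nat.le_add_right _ _
  have h5 : n * S18.e c d = d * (n + k) := by
    calc n * S18.e c d = (n / d * d) * S18.e c d := by rw [hp]
      _ = n / d * S18.e c d * d := by ring
      _ = (n + k) * d := by rw [hnk]
      _ = d * (n + k) := by ring
  have h6 : n ∣ k * d := by
    refine ⟨S18.e c d - d, ?_⟩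
    have h5' : (n : ℤ) * S18.e c d = d * (n + k) := by exact_mod_cast h5
    have hz : (k : ℤ) * d = n * (S18.e c d - d) := by linear_combination -h5'
    zify [hdle]
    exact hz
  -- arithmetic reductions
  set g := Nat.gcd (Nat.gcd n k) j with hgdef
  have hgn : g ∣ n := (Nat.gcd_dvd_left _ _).trans (Nat.gcd_dvd_left n k)
  have hgk : g ∣ k := (Nat.gcd_dvd_left _ _).trans (Nat.gcd_dvd_right n k)
  have hg0 : g ≠ 0 := by
    have : g ∣ j := Nat.gcd_dvd_right _ _
    intro h; rw [h] at this; omega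
  have hgm : g ∣ n + k := Nat.dvd_add hgn hgk
  have hgj0 : Nat.gcd n j ≠ 0 := by
    have := Nat.gcd_pos_of_pos_left j hn0; omega
  rw [Nat.div_dvd_iff_dvd_mul hgm (Nat.pos_of_ne_zero hg0), Nat.div_dvd_iff_dvd_mul (Nat.gcd_dvd_left n j) (Nat.pos_of_ne_zero hgj0)]
  have step2 : (n + k) ∣ g * S18.e c d ↔ n ∣ g * d := by
    rw [← Nat.mul_dvd_mul_iff_right hn0 (b := g * S18.e c d),
      show g * S18.e c d * n = g * d * (n + k) by rw [mul_assoc, mul_comm (S18.e c d) n, h5]; ring,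
      show (n + k) * n = n * (n + k) by ring,
      Nat.mul_dvd_mul_iff_right (show 0 < n + k by omega)]
  rw [step2]
  -- n ∣ g * d ↔ n ∣ gcd n j * d, both ↔ n ∣ j * d
  have hkd : n ∣ Nat.gcd n k * d := by
    rw [← Nat.gcd_mul_right]
    exact Nat.dvd_gcd (dvd_mul_right n d) h6
  constructor
  · intro h
    have h1 : n ∣ j * d := by
      have : g * d = Nat.gcd (Nat.gcd n k * d) (j * d) := (Nat.gcd_mul_right _ d _).symm
      exact (h.trans (this ▸ Nat.gcd_dvd_right _ _) : n ∣ j * d)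
    rw [show Nat.gcd n j * d = Nat.gcd (n * d) (j * d) from (Nat.gcd_mul_right _ d _).symm]
    exact Nat.dvd_gcd (dvd_mul_right n d) h1
  · intro h
    have h1 : n ∣ j * d := by
      have : Nat.gcd n j * d = Nat.gcd (n * d) (j * d) := (Nat.gcd_mul_right _ d _).symm
      exact h.trans (this ▸ Nat.gcd_dvd_right _ _)
    rw [show g * d = Nat.gcd (Nat.gcd n k * d) (j * d) from (Nat.gcd_mul_right _ d _).symm]
    exact Nat.dvd_gcd hkd h1
end
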